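/- arXiv:2402.16547 — 10 statements merged into one kernel-verified Lean document; each statement's English description precedes it below -/
import Mathlib

section
/- Let {(a_i, q_i)}_{i∈[k]} be a solution to the unit-demand pricing problem with price-floors, i.e. a_i ∈ A and q_i ∈ Q_{a_i} for all i ∈ [k]. Then for each i there exists a payment vector p_i ∈ Π_{a_i} with F_{a_i}^⊤p_i = q_i, and for any such choice the menu P = {(a_i, p_i)}_{i∈[k]} is IC for the service provider and its expected utility U(P) equals the seller's value Σ_θ ξ_θ (q_{i(θ)} − c_{a_{i(θ)}}) of the pricing solution. -/
open Finset

/-- A (discrete) delegation problem instance `(Θ, ξ, Ω, A, F, R, c)`. -/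
structure DelegationInstance (Θ Ω A : Type*) [Fintype Θ] [Fintype Ω] [Fintype A] where
  /-- distribution over user types -/
  ξ : Θ → ℝ
  /-- outcome distribution of each action -/
  F : A → Ω → ℝ
  /-- reward vector of each type -/
  R : Θ → Ω → ℝ
  /-- cost of each action -/
  c : A → ℝ
  ξ_nonneg : ∀ θ, 0 ≤ ξ θ
  ξ_sum : ∑ θ, ξ θ = 1
  F_nonneg : ∀ a ω, 0 ≤ F a ω
  F_sum : ∀ a, ∑ ω, F a ω = 1
  R_nonneg : ∀ θ ω, 0 ≤ R θ ω
  R_le_one : ∀ θ ω, R θ ω ≤ 1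
  c_nonneg : ∀ a, 0 ≤ c a
  c_le_one : ∀ a, c a ≤ 1

namespace DelegationInstance

variable {Θ Ω A : Type*} [Fintype Θ] [Fintype Ω] [Fintype A]

/-- Expected payment `F_a^⊤ p` of the payment vector `p` under action `a`. -/
def ep (I : DelegationInstance Θ Ω A) (a : A) (p : Ω → ℝ) : ℝ :=
  ∑ ω, I.F a ω * p ω

/-- The polytope `Π_a` of IC (nonnegative) payment vectors for action `a`. -/
def Pi (I : DelegationInstance Θ Ω A) (a : A) : Set (Ω → ℝ) :=
  {p | (∀ ω, 0 ≤ p ω) ∧ ∀ a', I.ep a p - I.c a ≥ I.ep a' p - I.c a'}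

/-- The set `Q_a` of feasible expected payments for action `a`. -/
def Q (I : DelegationInstance Θ Ω A) (a : A) : Set ℝ :=
  {q | ∃ p ∈ I.Pi a, I.ep a p = q}

end DelegationInstance

/-- `sel` is a valid user selection function for user utilities `u` and
provider utilities `v`: a type selects the opt-out `none` iff every option has
negative user utility; otherwise it selects an option maximizing the user's
utility, breaking ties in favor of the provider's utility. -/
def IsSel {Θ ι : Type*} (u : Θ → ι → ℝ) (v : ι → ℝ) (sel : Θ → Option ι) : Prop :=
  ∀ θ, (sel θ = none → ∀ i, u θ i < 0) ∧
    ∀ i, sel θ = some i →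
      0 ≤ u θ i ∧ (∀ j, u θ j ≤ u θ i) ∧ ∀ j, u θ j = u θ i → v j ≤ v i

/-- Expected provider value of a selection function (opt-out contributes `0`). -/
def selValue {Θ ι : Type*} [Fintype Θ] (ξ : Θ → ℝ) (v : ι → ℝ) (sel : Θ → Option ι) : ℝ :=
  ∑ θ, ξ θ * ((sel θ).elim 0 v)

namespace DelegationInstance

variable {Θ Ω A : Type*} [Fintype Θ] [Fintype Ω] [Fintype A]

/-- User utility `F_{a_i}^⊤ (R_θ - p_i)` of type `θ` for option `i` of a menu. -/
def menuU (I : DelegationInstance Θ Ω A) {ι : Type*} (a : ι → A) (p : ι → Ω → ℝ) :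
    Θ → ι → ℝ :=
  fun θ i => I.ep (a i) fun ω => I.R θ ω - p i ω

/-- Provider utility `F_{a_i}^⊤ p_i - c_{a_i}` of option `i` of a menu. -/
def menuV (I : DelegationInstance Θ Ω A) {ι : Type*} (a : ι → A) (p : ι → Ω → ℝ) :
    ι → ℝ :=
  fun i => I.ep (a i) (p i) - I.c (a i)

/-- Buyer utility `F_{a_i}^⊤ R_θ - q_i` of type `θ` for item `i` in the pricing problem. -/
def priceU (I : DelegationInstance Θ Ω A) {ι : Type*} (a : ι → A) (q : ι → ℝ) :
    Θ → ι → ℝ :=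
  fun θ i => I.ep (a i) (I.R θ) - q i

/-- Seller utility `q_i - c_{a_i}` of item `i` in the pricing problem. -/
def priceV (I : DelegationInstance Θ Ω A) {ι : Type*} (a : ι → A) (q : ι → ℝ) :
    ι → ℝ :=
  fun i => q i - I.c (a i)

end DelegationInstance

open DelegationInstance in
/-- From a feasible solution `{(a_i, q_i)}` of the unit-demand pricing problem with
price-floors one can build payment vectors `p_i ∈ Π_{a_i}` with `F_{a_i}^⊤ p_i = q_i`;
for any such choice the menu `{(a_i, p_i)}` is IC for the service provider, and its
expected utility equals the seller's value of the pricing solution. -/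
theorem stmt1 {Θ Ω A : Type*} [Fintype Θ] [Fintype Ω] [Fintype A]
    (I : DelegationInstance Θ Ω A) (k : ℕ) (a : Fin k → A) (q : Fin k → ℝ)
    (hq : ∀ i, q i ∈ I.Q (a i)) :
    (∀ i, ∃ p ∈ I.Pi (a i), I.ep (a i) p = q i) ∧
    ∀ p : Fin k → Ω → ℝ,
      (∀ i, p i ∈ I.Pi (a i)) → (∀ i, I.ep (a i) (p i) = q i) →
      (∀ i, p i ∈ I.Pi (a i)) ∧
      ∀ selM selP : Θ → Option (Fin k),
        IsSel (I.menuU a p) (I.menuV a p) selM →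
        IsSel (I.priceU a q) (I.priceV a q) selP →
        selValue I.ξ (I.menuV a p) selM = selValue I.ξ (I.priceV a q) selP := by
  refine ⟨fun i => hq i, fun p hp hep => ⟨hp, fun selM selP hM hP => ?_⟩⟩
  have hu : I.menuU a p = I.priceU a q := by
    funext θ i
    simp only [DelegationInstance.menuU, DelegationInstance.priceU, DelegationInstance.ep,
      mul_sub, Finset.sum_sub_distrib]
    rw [show ∑ ω, I.F (a i) ω * p i ω = q i from hep i]
  have hv : I.menuV a p = I.priceV a q := by
    funext i
    simp only [DelegationInstance.menuV, DelegationInstance.priceV, hep i]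
  rw [hu, hv] at hM; rw [hv]
  -- now selM and selP are both valid selections for the same (u, v)
  unfold selValue
  refine Finset.sum_congr rfl fun θ _ => ?_
  congr 1
  obtain ⟨hM0, hMs⟩ := hM θ
  obtain ⟨hP0, hPs⟩ := hP θ
  cases hsm : selM θ with
  | none =>
    cases hsp : selP θ with
    | none => rfl
    | some j =>
      exact absurd (hPs j hsp).1 (not_le.mpr (hM0 hsm j))
  | some i =>
    cases hsp : selP θ with
    | none => exact absurd (hMs i hsm).1 (not_le.mpr (hP0 hsp i))
    | some j =>
      obtain ⟨_, hMle, hMtie⟩ := hMs i hsm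
      obtain ⟨_, hPle, hPtie⟩ := hPs j hsp
      have huij : I.priceU a q θ j = I.priceU a q θ i := le_antisymm (hMle j) (hPle i)
      exact le_antisymm (hPtie i huij.symm) (hMtie j huij)
end

section
/- If the number of actions satisfies ℓ ≤ n, then OPT_ℓ = OPT. In particular, for every feasible direct menu there exists an IC menu of deterministic payment schemes of size at most ℓ whose service provider expected utility is at least that of the direct menu. -/
open Finset

namespace DelegationInstance

variable {Θ Ω A : Type*} [Fintype Θ] [Fintype Ω] [Fintype A]

/-- `OPT_k`: the optimal expected provider utility over IC menus of size `k`
(together with a valid user selection). -/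
noncomputable def OPTk (I : DelegationInstance Θ Ω A) (k : ℕ) : ℝ :=
  sSup {U | ∃ (a : Fin k → A) (p : Fin k → Ω → ℝ) (sel : Θ → Option (Fin k)),
    (∀ i, p i ∈ I.Pi (a i)) ∧ IsSel (I.menuU a p) (I.menuV a p) sel ∧
    U = selValue I.ξ (I.menuV a p) sel}

/-- User utility of type `θ` for a direct-menu option (`none` is the opt-out pair). -/
def optU (I : DelegationInstance Θ Ω A) (θ : Θ) (o : Option (A × (Ω → ℝ))) : ℝ :=
  o.elim 0 fun ap => I.ep ap.1 fun ω => I.R θ ω - ap.2 ω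

/-- Provider utility of a direct-menu option (`none` is the opt-out pair). -/
def optV (I : DelegationInstance Θ Ω A) (o : Option (A × (Ω → ℝ))) : ℝ :=
  o.elim 0 fun ap => I.ep ap.1 ap.2 - I.c ap.1

/-- A feasible direct menu: provider IC, user IC and user IR. -/
def DirectFeasible (I : DelegationInstance Θ Ω A) (m : Θ → Option (A × (Ω → ℝ))) : Prop :=
  (∀ θ, (m θ).elim True fun ap => ap.2 ∈ I.Pi ap.1) ∧
  (∀ θ θ', I.optU θ (m θ') ≤ I.optU θ (m θ)) ∧
  (∀ θ, 0 ≤ I.optU θ (m θ))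

/-- Expected provider utility of a direct menu. -/
def directValue (I : DelegationInstance Θ Ω A) (m : Θ → Option (A × (Ω → ℝ))) : ℝ :=
  ∑ θ, I.ξ θ * I.optV (m θ)

/-- `OPT`: the optimal expected provider utility over feasible direct menus. -/
noncomputable def DOPT (I : DelegationInstance Θ Ω A) : ℝ :=
  sSup {U | ∃ m, I.DirectFeasible m ∧ U = I.directValue m}

end DelegationInstance


/- ------------------------------------------------------------------ -/
/- Auxiliary results                                                  -/
/- ------------------------------------------------------------------ -/

lemma exists_sel {Θ ι : Type*} [Fintype ι] (u : Θ → ι → ℝ) (v : ι → ℝ) :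
    ∃ sel, IsSel u v sel := by
  classical
  have h : ∀ θ, ∃ o : Option ι, (o = none → ∀ i, u θ i < 0) ∧
      ∀ i, o = some i → 0 ≤ u θ i ∧ (∀ j, u θ j ≤ u θ i) ∧ ∀ j, u θ j = u θ i → v j ≤ v i := by
    intro θ
    by_cases hι : Nonempty ι
    · obtain ⟨i0, -, hi0⟩ := Finset.exists_max_image Finset.univ (u θ)
        ⟨Classical.arbitrary ι, Finset.mem_univ _⟩
      have hS : (Finset.univ.filter fun i => ∀ j, u θ j ≤ u θ i).Nonempty :=
        ⟨i0, Finset.mem_filter.2 ⟨Finset.mem_univ _, fun j => hi0 j (Finset.mem_univ _)⟩⟩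
      obtain ⟨i, hiS, hiv⟩ := Finset.exists_max_image _ v hS
      have hiu : ∀ j, u θ j ≤ u θ i := (Finset.mem_filter.1 hiS).2
      by_cases hpos : 0 ≤ u θ i
      · refine ⟨some i, by simp, ?_⟩
        intro j hj
        obtain rfl : i = j := by injection hj
        refine ⟨hpos, hiu, fun j' hj' => ?_⟩
        exact hiv j' (Finset.mem_filter.2 ⟨Finset.mem_univ _, fun k => hj' ▸ hiu k⟩)
      · exact ⟨none, fun _ j => lt_of_le_of_lt (hiu j) (not_le.1 hpos), by simp⟩
    · exact ⟨none, fun _ i => absurd ⟨i⟩ hι, fun i => absurd ⟨i⟩ hι⟩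
  choose sel hsel using h
  exact ⟨sel, hsel⟩

namespace DelegationInstance

variable {Θ Ω A : Type*} [Fintype Θ] [Fintype Ω] [Fintype A]

lemma ep_sub (I : DelegationInstance Θ Ω A) (a : A) (f g : Ω → ℝ) :
    I.ep a (fun ω => f ω - g ω) = I.ep a f - I.ep a g := by
  simp [ep, mul_sub, Finset.sum_sub_distrib]

lemma ep_nonneg (I : DelegationInstance Θ Ω A) (a : A) {f : Ω → ℝ} (hf : ∀ ω, 0 ≤ f ω) :
    0 ≤ I.ep a f :=
  Finset.sum_nonneg fun ω _ => mul_nonneg (I.F_nonneg a ω) (hf ω)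

lemma ep_le_one (I : DelegationInstance Θ Ω A) (a : A) {f : Ω → ℝ} (hf : ∀ ω, f ω ≤ 1) :
    I.ep a f ≤ 1 := by
  calc I.ep a f ≤ ∑ ω, I.F a ω := Finset.sum_le_sum fun ω _ => by
        have h1 := I.F_nonneg a ω
        have h2 := hf ω
        nlinarith
    _ = 1 := I.F_sum a

lemma ep_const (I : DelegationInstance Θ Ω A) (a : A) (t : ℝ) :
    I.ep a (fun _ => t) = t := by
  unfold ep
  rw [← Finset.sum_mul, I.F_sum, one_mul]

lemma epR_le_one (I : DelegationInstance Θ Ω A) (a : A) (θ : Θ) :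
    I.ep a (I.R θ) ≤ 1 :=
  I.ep_le_one a fun ω => I.R_le_one θ ω

/-- From an IC menu (with a valid selection) one obtains a feasible direct menu
of the same value. -/
lemma menu_to_direct (I : DelegationInstance Θ Ω A) {k : ℕ} (a : Fin k → A)
    (p : Fin k → Ω → ℝ) (sel : Θ → Option (Fin k)) (hp : ∀ i, p i ∈ I.Pi (a i))
    (hsel : IsSel (I.menuU a p) (I.menuV a p) sel) :
    ∃ m, I.DirectFeasible m ∧ I.directValue m = selValue I.ξ (I.menuV a p) sel := by
  classical
  set m : Θ → Option (A × (Ω → ℝ)) := fun θ => (sel θ).map fun i => (a i, p i) with hm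
  have hU : ∀ θ θ', I.optU θ (m θ') = (sel θ').elim 0 (I.menuU a p θ) := by
    intro θ θ'
    cases h : sel θ' <;> simp [hm, h, optU, menuU]
  have hV : ∀ θ, I.optV (m θ) = (sel θ).elim 0 (I.menuV a p) := by
    intro θ
    cases h : sel θ <;> simp [hm, h, optV, menuV]
  have hIRsel : ∀ θ, 0 ≤ (sel θ).elim 0 (I.menuU a p θ) := by
    intro θ
    cases h : sel θ with
    | none => simp
    | some i => exact ((hsel θ).2 i h).1
  refine ⟨m, ⟨?_, ?_, ?_⟩, ?_⟩
  · intro θ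
    cases h : sel θ <;> simp [hm, h, hp _]
  · intro θ θ'
    rw [hU, hU]
    cases h : sel θ with
    | none =>
      have hneg := (hsel θ).1 h
      cases h' : sel θ' with
      | none => simp
      | some j => simpa [h] using le_of_lt (hneg j)
    | some i =>
      obtain ⟨h0, hmax, -⟩ := (hsel θ).2 i h
      cases h' : sel θ' with
      | none => simpa [h] using h0
      | some j => simpa [h] using hmax j
  · intro θ
    rw [hU]
    exact hIRsel θ
  · unfold directValue selValue
    exact Finset.sum_congr rfl fun θ _ => by rw [hV]

/-- Generic comparison lemma: if every menu option has nonnegative provider value,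
is weakly dominated (for each user) by the user's own direct-menu option, and every
direct-menu option with positive provider value is represented in the menu, then
the menu's value (under any valid selection) is at least the direct menu's value. -/
lemma value_le (I : DelegationInstance Θ Ω A) (m : Θ → Option (A × (Ω → ℝ)))
    (hIR : ∀ θ, 0 ≤ I.optU θ (m θ))
    {k : ℕ} (a : Fin k → A) (p : Fin k → Ω → ℝ)
    (hV0 : ∀ i, 0 ≤ I.menuV a p i)
    (hUle : ∀ θ i, I.menuU a p θ i ≤ I.optU θ (m θ))
    (hcover : ∀ θ, 0 < I.optV (m θ) →
      ∃ i, I.menuU a p θ i = I.optU θ (m θ) ∧ I.menuV a p i = I.optV (m θ))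
    (sel : Θ → Option (Fin k)) (hsel : IsSel (I.menuU a p) (I.menuV a p) sel) :
    I.directValue m ≤ selValue I.ξ (I.menuV a p) sel := by
  unfold directValue selValue
  refine Finset.sum_le_sum fun θ _ => mul_le_mul_of_nonneg_left ?_ (I.ξ_nonneg θ)
  cases hs : sel θ with
  | none =>
    show I.optV (m θ) ≤ 0
    by_contra hlt
    push_neg at hlt
    obtain ⟨i, hui, -⟩ := hcover θ hlt
    have := (hsel θ).1 hs i
    have := hIR θ
    linarith [hui ▸ this]
  | some j =>
    show I.optV (m θ) ≤ I.menuV a p j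
    obtain ⟨h0, hmax, htie⟩ := (hsel θ).2 j hs
    rcases le_or_gt (I.optV (m θ)) 0 with hle | hpos
    · exact hle.trans (hV0 j)
    · obtain ⟨i, hui, hvi⟩ := hcover θ hpos
      have h1 : I.menuU a p θ i ≤ I.menuU a p θ j := hmax i
      have h2 : I.menuU a p θ j ≤ I.menuU a p θ i := by
        rw [hui]; exact hUle θ j
      have := htie i (le_antisymm h1 h2)
      linarith [hvi ▸ this]

/-- The key construction: from a feasible direct menu one obtains an IC menu of
size `|A|` (with a valid selection) of at least the same value. -/
lemma direct_to_menu (I : DelegationInstance Θ Ω A) (m : Θ → Option (A × (Ω → ℝ)))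
    (hm : I.DirectFeasible m) :
    ∃ (a : Fin (Fintype.card A) → A) (p : Fin (Fintype.card A) → Ω → ℝ)
      (sel : Θ → Option (Fin (Fintype.card A))),
      (∀ i, p i ∈ I.Pi (a i)) ∧ IsSel (I.menuU a p) (I.menuV a p) sel ∧
      I.directValue m ≤ selValue I.ξ (I.menuV a p) sel := by
  classical
  obtain ⟨hIC, hUIC, hIR⟩ := hm
  by_cases hA : Nonempty A
  swap
  · -- no actions: the direct menu is trivial and so is the menu
    have hc : Fintype.card A = 0 := Fintype.card_eq_zero_iff.2 (not_nonempty_iff.1 hA)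
    have hm0 : ∀ θ, m θ = none := by
      intro θ
      cases hmθ : m θ with
      | none => rfl
      | some ap => exact absurd ⟨ap.1⟩ hA
    refine ⟨fun i => ((Fin.cast hc i).elim0 : A), fun i => (Fin.cast hc i).elim0,
      fun _ => none, fun i => (Fin.cast hc i).elim0,
      fun θ => ⟨fun _ i => (Fin.cast hc i).elim0, fun i => (Fin.cast hc i).elim0⟩, ?_⟩
    have : I.directValue m = 0 := by
      unfold directValue
      refine Finset.sum_eq_zero fun θ _ => by simp [hm0 θ, optV]
    rw [this]
    unfold selValue
    refine le_of_eq (Finset.sum_eq_zero fun θ _ => by simp).symm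
  · -- at least one action
    obtain ⟨a0, -, ha0⟩ := Finset.exists_min_image Finset.univ I.c
      ⟨Classical.arbitrary A, Finset.mem_univ _⟩
    -- types assigned the same action pay the same expected payment
    have eqpay : ∀ {θ₁ θ₂ : Θ} {b : A} {p₁ p₂ : Ω → ℝ}, m θ₁ = some (b, p₁) →
        m θ₂ = some (b, p₂) → I.ep b p₁ = I.ep b p₂ := by
      intro θ₁ θ₂ b p₁ p₂ h1 h2
      have k1 := hUIC θ₁ θ₂
      have k2 := hUIC θ₂ θ₁
      rw [h1, h2] at k1 k2
      simp only [optU, Option.elim] at k1 k2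
      rw [I.ep_sub b (I.R θ₁) p₂, I.ep_sub b (I.R θ₁) p₁] at k1
      rw [I.ep_sub b (I.R θ₂) p₁, I.ep_sub b (I.R θ₂) p₂] at k2
      linarith
    -- for each action, a representative menu option
    have hopt : ∀ b : A, ∃ o : A × (Ω → ℝ), o.2 ∈ I.Pi o.1 ∧
        0 ≤ I.ep o.1 o.2 - I.c o.1 ∧
        (∀ θ, I.ep o.1 (fun ω => I.R θ ω - o.2 ω) ≤ I.optU θ (m θ)) ∧
        (∀ θ p', m θ = some (b, p') → 0 ≤ I.ep b p' - I.c b →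
          o.1 = b ∧ I.ep o.1 o.2 = I.ep b p') := by
      intro b
      by_cases hg : ∃ θ p', m θ = some (b, p') ∧ 0 ≤ I.ep b p' - I.c b
      · obtain ⟨θ₀, p₀, hmθ₀, hpos₀⟩ := hg
        have hpPi : p₀ ∈ I.Pi b := by
          have := hIC θ₀
          rw [hmθ₀] at this
          exact this
        refine ⟨(b, p₀), hpPi, hpos₀, ?_, ?_⟩
        · intro θ
          have := hUIC θ θ₀
          rw [hmθ₀] at this
          exact this
        · intro θ p' hmθ _
          exact ⟨rfl, eqpay hmθ₀ hmθ⟩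
      · refine ⟨(a0, fun _ => 2), ⟨fun ω => by norm_num, ?_⟩, ?_, ?_, ?_⟩
        · intro a'
          rw [I.ep_const, I.ep_const]
          have := ha0 a' (Finset.mem_univ a')
          linarith
        · rw [I.ep_const]
          have := I.c_le_one a0
          linarith
        · intro θ
          have h1 : I.ep a0 (fun ω => I.R θ ω - 2) = I.ep a0 (I.R θ) - 2 := by
            rw [I.ep_sub a0 (I.R θ) (fun _ => 2), I.ep_const]
          have h2 := I.epR_le_one a0 θ
          have h3 := hIR θ
          rw [h1]
          linarith
        · intro θ p' hmθ hge
          exact absurd ⟨θ, p', hmθ, hge⟩ hg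
    choose rep hrep1 hrep2 hrep3 hrep4 using hopt
    set e : Fin (Fintype.card A) ≃ A := (Fintype.equivFin A).symm with he
    set a : Fin (Fintype.card A) → A := fun i => (rep (e i)).1 with ha
    set p : Fin (Fintype.card A) → Ω → ℝ := fun i => (rep (e i)).2 with hpd
    obtain ⟨sel, hsel⟩ := exists_sel (I.menuU a p) (I.menuV a p)
    refine ⟨a, p, sel, fun i => hrep1 (e i), hsel, ?_⟩
    refine I.value_le m hIR a p ?_ ?_ ?_ sel hsel
    · intro i
      exact hrep2 (e i)
    · intro θ i
      exact hrep3 (e i) θ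
    · intro θ hpos
      cases hmθ : m θ with
      | none => rw [hmθ] at hpos; simp [optV] at hpos
      | some bp =>
        obtain ⟨b, p'⟩ := bp
        rw [hmθ] at hpos
        have hposv : 0 ≤ I.ep b p' - I.c b := le_of_lt (by simpa [optV] using hpos)
        have h4 := hrep4 (e (e.symm b)) θ p' (by rw [e.apply_symm_apply]; exact hmθ)
          (by rw [e.apply_symm_apply]; exact hposv)
        rw [e.apply_symm_apply] at h4
        obtain ⟨hb1, hb2⟩ := h4
        rw [hb1] at hb2
        refine ⟨e.symm b, ?_, ?_⟩
        · show I.ep (a (e.symm b)) (fun ω => I.R θ ω - p (e.symm b) ω) = _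
          rw [I.ep_sub]
          simp only [optU, Option.elim]
          rw [I.ep_sub b (I.R θ) p']
          simp only [ha, hpd, Equiv.apply_symm_apply]
          rw [hb1, hb2]
        · show I.ep (a (e.symm b)) (p (e.symm b)) - I.c (a (e.symm b)) = _
          simp only [optV, Option.elim]
          simp only [ha, hpd, Equiv.apply_symm_apply]
          rw [hb1, hb2]

lemma directValue_le_one (I : DelegationInstance Θ Ω A) (m : Θ → Option (A × (Ω → ℝ)))
    (hm : I.DirectFeasible m) : I.directValue m ≤ 1 := by
  obtain ⟨-, -, hIR⟩ := hm
  unfold directValue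
  calc ∑ θ, I.ξ θ * I.optV (m θ) ≤ ∑ θ, I.ξ θ * 1 := by
        refine Finset.sum_le_sum fun θ _ => mul_le_mul_of_nonneg_left ?_ (I.ξ_nonneg θ)
        cases hmθ : m θ with
        | none => simp [optV]
        | some bp =>
          obtain ⟨b, q⟩ := bp
          have h1 := hIR θ
          rw [hmθ] at h1
          simp only [optU, Option.elim] at h1
          rw [I.ep_sub b (I.R θ) q] at h1
          have h2 := I.epR_le_one b θ
          have h3 := I.c_nonneg b
          simp only [optV, Option.elim]
          linarith
    _ = 1 := by simp [I.ξ_sum]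

lemma selValue_le_one (I : DelegationInstance Θ Ω A) {k : ℕ} (a : Fin k → A)
    (p : Fin k → Ω → ℝ) (sel : Θ → Option (Fin k))
    (hsel : IsSel (I.menuU a p) (I.menuV a p) sel) :
    selValue I.ξ (I.menuV a p) sel ≤ 1 := by
  unfold selValue
  calc ∑ θ, I.ξ θ * (sel θ).elim 0 (I.menuV a p) ≤ ∑ θ, I.ξ θ * 1 := by
        refine Finset.sum_le_sum fun θ _ => mul_le_mul_of_nonneg_left ?_ (I.ξ_nonneg θ)
        cases hs : sel θ with
        | none => simp
        | some i =>
          have h0 := ((hsel θ).2 i hs).1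
          simp only [menuU] at h0
          rw [I.ep_sub (a i) (I.R θ) (p i)] at h0
          have h2 := I.epR_le_one (a i) θ
          have h3 := I.c_nonneg (a i)
          simp only [Option.elim, menuV]
          linarith
    _ = 1 := by simp [I.ξ_sum]

lemma trivial_direct (I : DelegationInstance Θ Ω A) :
    I.DirectFeasible (fun _ => (none : Option (A × (Ω → ℝ)))) ∧
    I.directValue (fun _ => none) = 0 := by
  refine ⟨⟨fun θ => trivial, fun θ θ' => le_refl 0, fun θ => le_refl 0⟩, ?_⟩
  unfold directValue
  exact Finset.sum_eq_zero fun θ _ => by simp [optV]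

end DelegationInstance

/-- If the number of actions `ℓ = |A|` is at most the number of types `n = |Θ|`, then
`OPT_ℓ = OPT`; in particular, every feasible direct menu is (weakly) dominated by an
IC menu of size at most `ℓ`. -/
theorem stmt3 {Θ Ω A : Type*} [Fintype Θ] [Fintype Ω] [Fintype A]
    (I : DelegationInstance Θ Ω A) (h : Fintype.card A ≤ Fintype.card Θ) :
    I.OPTk (Fintype.card A) = I.DOPT ∧
    ∀ m, I.DirectFeasible m →
      ∃ (k' : ℕ) (a : Fin k' → A) (p : Fin k' → Ω → ℝ) (sel : Θ → Option (Fin k')),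
        k' ≤ Fintype.card A ∧ (∀ i, p i ∈ I.Pi (a i)) ∧
        IsSel (I.menuU a p) (I.menuV a p) sel ∧
        I.directValue m ≤ selValue I.ξ (I.menuV a p) sel := by
  classical
  have triv := I.trivial_direct
  have bdd1 : BddAbove {U | ∃ (a : Fin (Fintype.card A) → A) (p : Fin (Fintype.card A) → Ω → ℝ)
      (sel : Θ → Option (Fin (Fintype.card A))), (∀ i, p i ∈ I.Pi (a i)) ∧
      IsSel (I.menuU a p) (I.menuV a p) sel ∧ U = selValue I.ξ (I.menuV a p) sel} := by
    refine ⟨1, ?_⟩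
    rintro x ⟨a, p, sel, hp, hs, rfl⟩
    exact I.selValue_le_one a p sel hs
  have bdd2 : BddAbove {U | ∃ m, I.DirectFeasible m ∧ U = I.directValue m} := by
    refine ⟨1, ?_⟩
    rintro x ⟨m, hm, rfl⟩
    exact I.directValue_le_one m hm
  have nonneg2 : (0:ℝ) ≤ sSup {U | ∃ m, I.DirectFeasible m ∧ U = I.directValue m} :=
    le_csSup bdd2 ⟨fun _ => none, triv.1, triv.2.symm⟩
  have nonneg1 : (0:ℝ) ≤ sSup {U | ∃ (a : Fin (Fintype.card A) → A)
      (p : Fin (Fintype.card A) → Ω → ℝ)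
      (sel : Θ → Option (Fin (Fintype.card A))), (∀ i, p i ∈ I.Pi (a i)) ∧
      IsSel (I.menuU a p) (I.menuV a p) sel ∧ U = selValue I.ξ (I.menuV a p) sel} := by
    obtain ⟨a, p, sel, hp, hs, hval⟩ := I.direct_to_menu (fun _ => none) triv.1
    rw [triv.2] at hval
    exact hval.trans (le_csSup bdd1 ⟨a, p, sel, hp, hs, rfl⟩)
  constructor
  · unfold DelegationInstance.OPTk DelegationInstance.DOPT
    apply le_antisymm
    · refine Real.sSup_le ?_ nonneg2
      rintro x ⟨a, p, sel, hp, hs, rfl⟩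
      obtain ⟨m, hm, hval⟩ := I.menu_to_direct a p sel hp hs
      rw [← hval]
      exact le_csSup bdd2 ⟨m, hm, rfl⟩
    · refine Real.sSup_le ?_ nonneg1
      rintro x ⟨m, hm, rfl⟩
      obtain ⟨a, p, sel, hp, hs, hval⟩ := I.direct_to_menu m hm
      exact hval.trans (le_csSup bdd1 ⟨a, p, sel, hp, hs, rfl⟩)
  · intro m hm
    obtain ⟨a, p, sel, hp, hs, hval⟩ := I.direct_to_menu m hm
    exact ⟨Fintype.card A, a, p, sel, le_refl _, hp, hs, hval⟩
end

section
/- For every integer n ≥ 1 and every integer k with 0 ≤ k ≤ n, there exists a delegation instance with n types, n actions, and n outcomes in which OPT = 1 and every IC menu of deterministic payment schemes of size k yields service provider expected utility at most k/n, i.e. OPT_k ≤ (k/n) · OPT. -/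
open Finset

noncomputable def badInstance (n : ℕ) (hn : 1 ≤ n) :
    DelegationInstance (Fin n) (Fin n) (Fin n) where
  ξ := fun _ => (n : ℝ)⁻¹
  F := fun a ω => if ω = a then 1 else 0
  R := fun θ ω => if ω = θ then 1 else 0
  c := fun _ => 0
  ξ_nonneg := fun _ => by positivity
  ξ_sum := by
    have hn' : (0:ℝ) < n := by exact_mod_cast hn
    simp [Finset.sum_const]
    field_simp
  F_nonneg := fun a ω => by split <;> norm_num
  F_sum := fun a => by simp
  R_nonneg := fun θ ω => by split <;> norm_num
  R_le_one := fun θ ω => by split <;> norm_num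
  c_nonneg := fun _ => le_refl 0
  c_le_one := fun _ => zero_le_one

lemma badInstance_ep (n : ℕ) (hn : 1 ≤ n) (a : Fin n) (p : Fin n → ℝ) :
    (badInstance n hn).ep a p = p a := by
  simp [DelegationInstance.ep, badInstance, ite_mul]

/-- For every `n ≥ 1` and `0 ≤ k ≤ n` there is a delegation instance with `n` types,
`n` actions and `n` outcomes in which `OPT = 1` while every IC menu of size `k`
(with any valid user selection) yields provider utility at most `k/n`;
in particular `OPT_k ≤ (k/n) ⬝ OPT`. -/
theorem stmt5 (n k : ℕ) (hn : 1 ≤ n) (hk : k ≤ n) :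
    ∃ I : DelegationInstance (Fin n) (Fin n) (Fin n),
      I.DOPT = 1 ∧
      (∀ (a : Fin k → Fin n) (p : Fin k → Fin n → ℝ) (sel : Fin n → Option (Fin k)),
        (∀ i, p i ∈ I.Pi (a i)) → IsSel (I.menuU a p) (I.menuV a p) sel →
        selValue I.ξ (I.menuV a p) sel ≤ (k : ℝ) / n) ∧
      I.OPTk k ≤ ((k : ℝ) / n) * I.DOPT := by
  classical
  set I := badInstance n hn with hIdef
  have hn' : (0:ℝ) < n := by exact_mod_cast hn
  have hep : ∀ (a : Fin n) (p : Fin n → ℝ), I.ep a p = p a := badInstance_ep n hn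
  have hξ : ∀ θ, I.ξ θ = (n:ℝ)⁻¹ := fun _ => rfl
  have hc : ∀ a, I.c a = 0 := fun _ => rfl
  have hR : ∀ θ ω : Fin n, I.R θ ω = if ω = θ then 1 else 0 := fun _ _ => rfl
  -- part 2: any size-k menu yields at most k/n
  have hmenu : ∀ (a : Fin k → Fin n) (p : Fin k → Fin n → ℝ) (sel : Fin n → Option (Fin k)),
      (∀ i, p i ∈ I.Pi (a i)) → IsSel (I.menuU a p) (I.menuV a p) sel →
      selValue I.ξ (I.menuV a p) sel ≤ (k : ℝ) / n := by
    intro a p sel hIC hsel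
    have hterm : ∀ θ, I.ξ θ * ((sel θ).elim 0 (I.menuV a p)) ≤
        if θ ∈ Finset.image a Finset.univ then (n:ℝ)⁻¹ else 0 := by
      intro θ
      have hrhs : (0:ℝ) ≤ if θ ∈ Finset.image a Finset.univ then (n:ℝ)⁻¹ else 0 := by
        split <;> positivity
      cases hs : sel θ with
      | none => simpa using hrhs
      | some i =>
        have h := ((hsel θ).2 i hs).1
        have hu : I.menuU a p θ i = (if a i = θ then 1 else 0) - p i (a i) := by
          simp only [DelegationInstance.menuU, hep, hR]
        have hv : I.menuV a p i = p i (a i) := by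
          simp only [DelegationInstance.menuV, hep, hc]; ring
        rw [hu] at h
        by_cases hai : a i = θ
        · have hmem : θ ∈ Finset.image a Finset.univ :=
            Finset.mem_image.2 ⟨i, Finset.mem_univ i, hai⟩
          have hp1 : p i (a i) ≤ 1 := by
            rw [if_pos hai] at h; linarith
          simp only [hs, Option.elim, hv, hξ, if_pos hmem]
          calc (n:ℝ)⁻¹ * p i (a i) ≤ (n:ℝ)⁻¹ * 1 := by
                apply mul_le_mul_of_nonneg_left hp1 (by positivity)
            _ = (n:ℝ)⁻¹ := mul_one _
        · have hp0 : p i (a i) ≤ 0 := by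
            rw [if_neg hai] at h; linarith
          have hge : 0 ≤ p i (a i) := (hIC i).1 (a i)
          have : p i (a i) = 0 := le_antisymm hp0 hge
          simp only [hs, Option.elim, hv, this, mul_zero]
          exact hrhs
    calc selValue I.ξ (I.menuV a p) sel
        ≤ ∑ θ, (if θ ∈ Finset.image a Finset.univ then (n:ℝ)⁻¹ else 0) :=
          Finset.sum_le_sum fun θ _ => hterm θ
      _ = (Finset.image a Finset.univ).card * (n:ℝ)⁻¹ := by
          rw [← Finset.sum_filter]
          simp [Finset.sum_const, Finset.filter_mem_eq_inter, mul_comm]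
      _ ≤ (k:ℝ) * (n:ℝ)⁻¹ := by
          apply mul_le_mul_of_nonneg_right _ (by positivity)
          have := Finset.card_image_le (f := a) (s := Finset.univ)
          simp only [Finset.card_univ, Fintype.card_fin] at this
          exact_mod_cast this
      _ = (k:ℝ) / n := by ring
  -- upper bound for DOPT
  have hub : ∀ U ∈ {U | ∃ m, I.DirectFeasible m ∧ U = I.directValue m}, U ≤ 1 := by
    rintro U ⟨m, ⟨hpic, huic, hir⟩, rfl⟩
    have hv1 : ∀ θ, I.optV (m θ) ≤ 1 := by
      intro θ
      cases hm : m θ with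
      | none => simp [DelegationInstance.optV]
      | some ap =>
        have h := hir θ
        rw [hm] at h
        simp only [DelegationInstance.optU, Option.elim, hep, hR] at h
        simp only [DelegationInstance.optV, Option.elim, hep, hc, sub_zero]
        have : I.R θ ap.1 ≤ 1 := I.R_le_one θ ap.1
        simp only [hR] at this
        split at h <;> linarith
    calc I.directValue m = ∑ θ, I.ξ θ * I.optV (m θ) := rfl
      _ ≤ ∑ θ : Fin n, (n:ℝ)⁻¹ * 1 := by
          apply Finset.sum_le_sum
          intro θ _
          rw [hξ]
          exact mul_le_mul_of_nonneg_left (hv1 θ) (by positivity)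
      _ = 1 := by
          rw [Finset.sum_const]
          simp [Finset.card_univ]
          field_simp
  -- membership: the full-extraction direct menu
  have hmem1 : (1:ℝ) ∈ {U | ∃ m, I.DirectFeasible m ∧ U = I.directValue m} := by
    refine ⟨fun θ => some (θ, fun ω => if ω = θ then 1 else 0), ⟨?_, ?_, ?_⟩, ?_⟩
    · intro θ
      refine ⟨fun ω => by positivity, fun a' => ?_⟩
      simp only [hep, hc, sub_zero, if_pos rfl, ge_iff_le]
      split <;> norm_num
    · intro θ θ'
      simp only [DelegationInstance.optU, Option.elim, hep, hR, if_pos rfl]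
      split <;> norm_num
    · intro θ
      simp only [DelegationInstance.optU, Option.elim, hep, hR, if_pos rfl]
      norm_num
    · simp only [DelegationInstance.directValue, DelegationInstance.optV, Option.elim,
        hep, hc, if_pos rfl, sub_zero, hξ]
      rw [Finset.sum_const]
      simp [Finset.card_univ]
      field_simp
  have hDOPT : I.DOPT = 1 := by
    apply le_antisymm
    · exact Real.sSup_le hub zero_le_one
    · exact le_csSup ⟨1, hub⟩ hmem1
  refine ⟨I, hDOPT, hmenu, ?_⟩
  rw [hDOPT, mul_one]
  apply Real.sSup_le
  · rintro U ⟨a, p, sel, hIC, hsel, rfl⟩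
    exact hmenu a p sel hIC hsel
  · positivity
end

section
/- Let ε ≥ 0 and δ ∈ (0,1]. Let P̃ = {(ã_θ, q̃_θ)}_{θ∈Θ} be a direct menu in expected-payment form with ã_θ ∈ A and 0 ≤ q̃_θ ≤ 1 such that q̃_θ ∈ Q_{ã_θ}^ε for every θ (ε-IC for the service provider), F_{ã_θ}^⊤R_θ − q̃_θ ≥ F_{ã_{θ'}}^⊤R_θ − q̃_{θ'} − δ for all θ, θ' (δ-IC for the user), and F_{ã_θ}^⊤R_θ − q̃_θ ≥ −δ for all θ (δ-IR for the user). Let ÕPT := Σ_θ ξ_θ (q̃_θ − c_{ã_θ}). Then there exist k' ∈ ℕ and a menu P = {(a_j, q_j)}_{j∈[k']} in expected-payment form with q_j ≥ 0 and q_j ∈ Q_{a_j}^{ε+√δ} for every j ∈ [k'], such that under the exact user selection with respect to the true rewards R the service provider's value satisfies Σ_θ ξ_θ (q_{i(θ|P)} − c_{a_{i(θ|P)}}) ≥ ÕPT − 4√δ. -/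
open Finset

namespace DelegationInstance

variable {Θ Ω A : Type*} [Fintype Θ] [Fintype Ω] [Fintype A]

/-- `Q_a^ε`: the set of expected payments that `ε`-induce action `a`. -/
def Qeps (I : DelegationInstance Θ Ω A) (ε : ℝ) (a : A) : Set ℝ :=
  {q | ∃ p : Ω → ℝ, (∀ ω, 0 ≤ p ω) ∧
    (∀ a', I.ep a p - I.c a ≥ I.ep a' p - I.c a' - ε) ∧ I.ep a p = q}

end DelegationInstance

/-- Robustness: from a direct menu (in expected-payment form) that is `ε`-IC for the
service provider and `δ`-IC and `δ`-IR for the user, one can build an (indirect) menu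
whose expected payments `(ε+√δ)`-induce their actions and whose provider value, under
the exact user selection with respect to the true rewards, is at least `ÕPT − 4√δ`. -/
theorem stmt8 {Θ Ω A : Type*} [Fintype Θ] [Fintype Ω] [Fintype A]
    (I : DelegationInstance Θ Ω A) (ε δ : ℝ) (hε : 0 ≤ ε) (hδ : δ ∈ Set.Ioc (0 : ℝ) 1)
    (ta : Θ → A) (tq : Θ → ℝ)
    (hq0 : ∀ θ, 0 ≤ tq θ) (hq1 : ∀ θ, tq θ ≤ 1)
    (hIC : ∀ θ, tq θ ∈ I.Qeps ε (ta θ))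
    (huIC : ∀ θ θ', I.ep (ta θ) (I.R θ) - tq θ ≥ I.ep (ta θ') (I.R θ) - tq θ' - δ)
    (huIR : ∀ θ, I.ep (ta θ) (I.R θ) - tq θ ≥ -δ) :
    ∃ (k' : ℕ) (a : Fin k' → A) (q : Fin k' → ℝ),
      (∀ j, 0 ≤ q j) ∧ (∀ j, q j ∈ I.Qeps (ε + Real.sqrt δ) (a j)) ∧
      ∀ sel : Θ → Option (Fin k'),
        IsSel (I.priceU a q) (I.priceV a q) sel →
        selValue I.ξ (I.priceV a q) sel ≥
          (∑ θ, I.ξ θ * (tq θ - I.c (ta θ))) - 4 * Real.sqrt δ := by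
  set s := Real.sqrt δ with hs
  have hs0 : 0 < s := Real.sqrt_pos.mpr hδ.1
  have hs1 : s ≤ 1 := Real.sqrt_le_one.mpr hδ.2
  have hs2 : s * s = δ := Real.mul_self_sqrt hδ.1.le
  set e : Fin (Fintype.card Θ) ≃ Θ := (Fintype.equivFin Θ).symm with he
  refine ⟨Fintype.card Θ, fun j => ta (e j),
    fun j => tq (e j) - s * (tq (e j) - I.c (ta (e j))), ?_, ?_, ?_⟩
  · intro j
    have h1 := hq0 (e j)
    have h3 := I.c_nonneg (ta (e j))
    show 0 ≤ tq (e j) - s * (tq (e j) - I.c (ta (e j)))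
    nlinarith
  · intro j
    obtain ⟨p, hp0, hpIC, hpq⟩ := hIC (e j)
    set C := I.c (ta (e j)) with hC
    refine ⟨fun ω => (1 - s) * p ω + s * C, ?_, ?_, ?_⟩
    · intro ω
      have := hp0 ω
      have := I.c_nonneg (ta (e j))
      show 0 ≤ (1 - s) * p ω + s * C
      nlinarith [I.c_nonneg (ta (e j))]
    all_goals {
      have hep : ∀ b, I.ep b (fun ω => (1 - s) * p ω + s * C)
          = (1 - s) * I.ep b p + s * C := by
        intro b
        unfold DelegationInstance.ep
        calc ∑ ω, I.F b ω * ((1 - s) * p ω + s * C)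
            = ∑ ω, ((1 - s) * (I.F b ω * p ω) + (s * C) * I.F b ω) := by
              apply Finset.sum_congr rfl; intro ω _; ring
          _ = (1 - s) * ∑ ω, I.F b ω * p ω + (s * C) * ∑ ω, I.F b ω := by
              rw [Finset.sum_add_distrib, Finset.mul_sum, Finset.mul_sum]
          _ = (1 - s) * ∑ ω, I.F b ω * p ω + s * C := by rw [I.F_sum]; ring
      first
      | { intro a'
          rw [hep, hep]
          have hD := hpIC a'
          have h1 := I.c_le_one (ta (e j))
          have h2 := I.c_nonneg a'
          nlinarith [mul_nonneg (by linarith : (0:ℝ) ≤ 1 - s)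
            (by linarith : (0:ℝ) ≤ I.ep (ta (e j)) p - I.c (ta (e j)) - (I.ep a' p - I.c a' - ε))] }
      | { rw [hep, hpq]; ring }
    }
  · intro sel hsel
    have key : ∀ θ, (tq θ - I.c (ta θ)) - 2 * s ≤
        (sel θ).elim 0 (I.priceV (fun j => ta (e j))
          (fun j => tq (e j) - s * (tq (e j) - I.c (ta (e j))))) := by
      intro θ
      cases hselθ : sel θ with
      | none =>
        have hu := (hsel θ).1 hselθ (e.symm θ)
        simp only [DelegationInstance.priceU, Equiv.apply_symm_apply] at hu
        have hIR := huIR θ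
        have hv : s * (tq θ - I.c (ta θ)) < s * s := by linarith
        have hv' : tq θ - I.c (ta θ) < s := lt_of_mul_lt_mul_left hv hs0.le
        simp only [Option.elim]
        linarith
      | some j =>
        obtain ⟨-, hmax, -⟩ := (hsel θ).2 j hselθ
        have hmax' := hmax (e.symm θ)
        simp only [DelegationInstance.priceU, Equiv.apply_symm_apply] at hmax'
        have hIC' := huIC θ (e j)
        have h1 : s * (tq θ - I.c (ta θ)) - s * s ≤
            s * (tq (e j) - I.c (ta (e j))) := by linarith
        have h2 : tq θ - I.c (ta θ) - s ≤ tq (e j) - I.c (ta (e j)) := by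
          have := le_of_mul_le_mul_left
            (show s * (tq θ - I.c (ta θ) - s) ≤ s * (tq (e j) - I.c (ta (e j))) by
              nlinarith) hs0
          linarith
        have h3 := hq1 (e j)
        have h4 := I.c_nonneg (ta (e j))
        simp only [Option.elim, DelegationInstance.priceV]
        nlinarith
    have hsum : ∀ θ ∈ Finset.univ (α := Θ),
        I.ξ θ * ((tq θ - I.c (ta θ)) - 2 * s) ≤
        I.ξ θ * ((sel θ).elim 0 (I.priceV (fun j => ta (e j))
          (fun j => tq (e j) - s * (tq (e j) - I.c (ta (e j)))))) :=
      fun θ _ => mul_le_mul_of_nonneg_left (key θ) (I.ξ_nonneg θ)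
    have := Finset.sum_le_sum hsum
    have hlhs : ∑ θ, I.ξ θ * ((tq θ - I.c (ta θ)) - 2 * s)
        = (∑ θ, I.ξ θ * (tq θ - I.c (ta θ))) - 2 * s := by
      simp only [mul_sub]
      rw [Finset.sum_sub_distrib, ← Finset.sum_mul, I.ξ_sum]
      ring
    unfold selValue
    rw [hlhs] at this
    linarith
end

section
/- Let the delegation instance be c̄-smooth for some c̄ > 0. Then for every action a ∈ A and every q ∈ Q_a, there exists a payment vector p ∈ Π_a with F_a^⊤p = q and p(ω) ≤ (1 + q)/c̄ for every ω ∈ Ω. -/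
open Finset

namespace DelegationInstance

variable {Θ Ω A : Type*} [Fintype Θ] [Fintype Ω] [Fintype A]

/-- The instance is `c̄`-smooth: every outcome has probability at least `c̄`
under some action. -/
def Smooth (I : DelegationInstance Θ Ω A) (cb : ℝ) : Prop :=
  ∀ ω, ∃ a, cb ≤ I.F a ω

end DelegationInstance

/-- In a `c̄`-smooth instance, every feasible expected payment `q ∈ Q_a` can be realized
by some `p ∈ Π_a` with `F_a^⊤ p = q` and `p(ω) ≤ (1+q)/c̄` for every outcome `ω`. -/
theorem stmt9 {Θ Ω A : Type*} [Fintype Θ] [Fintype Ω] [Fintype A]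
    (I : DelegationInstance Θ Ω A) (cb : ℝ) (hcb : 0 < cb) (hs : I.Smooth cb)
    (a : A) (q : ℝ) (hq : q ∈ I.Q a) :
    ∃ p ∈ I.Pi a, I.ep a p = q ∧ ∀ ω, p ω ≤ (1 + q) / cb := by
  obtain ⟨p, hp, hpq⟩ := hq
  refine ⟨p, hp, hpq, fun ω => ?_⟩
  obtain ⟨a', ha'⟩ := hs ω
  obtain ⟨hp0, hIC⟩ := hp
  have h1 : cb * p ω ≤ I.F a' ω * p ω :=
    mul_le_mul_of_nonneg_right ha' (hp0 ω)
  have h2 : I.F a' ω * p ω ≤ I.ep a' p := by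
    apply Finset.single_le_sum (f := fun ω' => I.F a' ω' * p ω')
      (fun ω' _ => mul_nonneg (I.F_nonneg a' ω') (hp0 ω')) (Finset.mem_univ ω)
  have h3 : I.ep a' p ≤ q + 1 := by
    have := hIC a'
    have hc1 := I.c_le_one a'
    have hc0 := I.c_nonneg a
    linarith [hpq ▸ this]
  have : cb * p ω ≤ 1 + q := by linarith
  rw [div_eq_inv_mul]
  calc p ω = cb⁻¹ * (cb * p ω) := by field_simp
    _ ≤ cb⁻¹ * (1 + q) := by
        apply mul_le_mul_of_nonneg_left this (inv_nonneg.mpr hcb.le)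
end

section
/- Consider a continuous-action delegation instance which is c̄-smooth for some c̄ > 0, and let δ > 0 with 1/δ ∈ ℕ. Then for every a ∈ [0,1] and every a' ∈ A_δ with |a − a'| ≤ δ: Q_a ∩ [0,1] ⊆ Q_{a'}^{δ(1+2/c̄)}(A_δ) ∩ [0,1] ⊆ Q_{a'}^{2δ(1+2/c̄)} ∩ [0,1]. -/
open Finset

/-- A continuous-action delegation instance: actions form the interval `[0,1]`,
the outcome distributions and costs are `1`-Lipschitz in the action. -/
structure ContInstance (Θ Ω : Type*) [Fintype Θ] [Fintype Ω] where
  /-- distribution over user types -/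
  ξ : Θ → ℝ
  /-- outcome distribution of each action in `[0,1]` -/
  F : ℝ → Ω → ℝ
  /-- reward vector of each type -/
  R : Θ → Ω → ℝ
  /-- cost of each action in `[0,1]` -/
  c : ℝ → ℝ
  ξ_nonneg : ∀ θ, 0 ≤ ξ θ
  ξ_sum : ∑ θ, ξ θ = 1
  F_nonneg : ∀ a ∈ Set.Icc (0 : ℝ) 1, ∀ ω, 0 ≤ F a ω
  F_sum : ∀ a ∈ Set.Icc (0 : ℝ) 1, ∑ ω, F a ω = 1
  F_lip : ∀ a ∈ Set.Icc (0 : ℝ) 1, ∀ a' ∈ Set.Icc (0 : ℝ) 1,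
    ∑ ω, |F a ω - F a' ω| ≤ |a - a'|
  R_nonneg : ∀ θ ω, 0 ≤ R θ ω
  R_le_one : ∀ θ ω, R θ ω ≤ 1
  c_nonneg : ∀ a ∈ Set.Icc (0 : ℝ) 1, 0 ≤ c a
  c_le_one : ∀ a ∈ Set.Icc (0 : ℝ) 1, c a ≤ 1
  c_lip : ∀ a ∈ Set.Icc (0 : ℝ) 1, ∀ a' ∈ Set.Icc (0 : ℝ) 1, |c a - c a'| ≤ |a - a'|

namespace ContInstance

variable {Θ Ω : Type*} [Fintype Θ] [Fintype Ω]

/-- Expected payment `F_a^⊤ p` of the payment vector `p` under action `a`. -/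
def ep (I : ContInstance Θ Ω) (a : ℝ) (p : Ω → ℝ) : ℝ :=
  ∑ ω, I.F a ω * p ω

/-- The set `Π_a` of IC (nonnegative) payment vectors for action `a ∈ [0,1]`. -/
def Pi (I : ContInstance Θ Ω) (a : ℝ) : Set (Ω → ℝ) :=
  {p | (∀ ω, 0 ≤ p ω) ∧
    ∀ a' ∈ Set.Icc (0 : ℝ) 1, I.ep a p - I.c a ≥ I.ep a' p - I.c a'}

/-- The set `Q_a` of feasible expected payments for action `a`. -/
def Q (I : ContInstance Θ Ω) (a : ℝ) : Set ℝ :=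
  {q | ∃ p ∈ I.Pi a, I.ep a p = q}

/-- `Q_a^ε`: expected payments that `ε`-induce action `a` against all of `[0,1]`. -/
def Qeps (I : ContInstance Θ Ω) (ε : ℝ) (a : ℝ) : Set ℝ :=
  {q | ∃ p : Ω → ℝ, (∀ ω, 0 ≤ p ω) ∧
    (∀ a' ∈ Set.Icc (0 : ℝ) 1, I.ep a p - I.c a ≥ I.ep a' p - I.c a' - ε) ∧
    I.ep a p = q}

/-- The instance is `c̄`-smooth: every outcome has probability at least `c̄`
under some action. -/
def Smooth (I : ContInstance Θ Ω) (cb : ℝ) : Prop :=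
  ∀ ω, ∃ a ∈ Set.Icc (0 : ℝ) 1, cb ≤ I.F a ω

end ContInstance

/-- The discretization `A_δ = {0, δ, 2δ, …, 1}` of the action set `[0,1]`. -/
def Adelta (δ : ℝ) : Set ℝ :=
  {x | (∃ j : ℕ, x = j * δ) ∧ x ≤ 1}

namespace ContInstance

variable {Θ Ω : Type*} [Fintype Θ] [Fintype Ω]

/-- `Q_a^ε(A_δ)`: expected payments that `ε`-induce action `a` against the
discretized action set `A_δ`. -/
def QepsD (I : ContInstance Θ Ω) (δ ε : ℝ) (a : ℝ) : Set ℝ :=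
  {q | ∃ p : Ω → ℝ, (∀ ω, 0 ≤ p ω) ∧
    (∀ a' ∈ Adelta δ, I.ep a p - I.c a ≥ I.ep a' p - I.c a' - ε) ∧
    I.ep a p = q}

end ContInstance

/-- In a `c̄`-smooth continuous-action instance, for `δ > 0` with `1/δ ∈ ℕ`, any
`a ∈ [0,1]` and `a' ∈ A_δ` with `|a − a'| ≤ δ`:
`Q_a ∩ [0,1] ⊆ Q_{a'}^{δ(1+2/c̄)}(A_δ) ∩ [0,1] ⊆ Q_{a'}^{2δ(1+2/c̄)} ∩ [0,1]`. -/
theorem stmt11 {Θ Ω : Type*} [Fintype Θ] [Fintype Ω]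
    (I : ContInstance Θ Ω) (cb δ : ℝ) (hcb : 0 < cb) (hs : I.Smooth cb)
    (hδ : 0 < δ) (hN : ∃ N : ℕ, 0 < N ∧ δ = 1 / N)
    (a a' : ℝ) (ha : a ∈ Set.Icc (0 : ℝ) 1) (ha' : a' ∈ Adelta δ)
    (hd : |a - a'| ≤ δ) :
    I.Q a ∩ Set.Icc (0 : ℝ) 1 ⊆ I.QepsD δ (δ * (1 + 2 / cb)) a' ∩ Set.Icc (0 : ℝ) 1 ∧
    I.QepsD δ (δ * (1 + 2 / cb)) a' ∩ Set.Icc (0 : ℝ) 1 ⊆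
      I.Qeps (2 * δ * (1 + 2 / cb)) a' ∩ Set.Icc (0 : ℝ) 1 := by
  obtain ⟨N, hN0, hδN⟩ := hN
  set ε := δ * (1 + 2 / cb) with hεdef
  have hcbne : cb ≠ 0 := ne_of_gt hcb
  have hcb2 : (0:ℝ) < 2 / cb := by positivity
  have hu : cb * (2 / cb) = 2 := by field_simp
  have hδε : δ ≤ ε := by nlinarith
  have hε0 : 0 < ε := lt_of_lt_of_le hδ hδε
  have hεe : ε = δ + δ * (2 / cb) := by rw [hεdef]; ring
  have hA_sub : Adelta δ ⊆ Set.Icc (0 : ℝ) 1 := by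
    rintro x ⟨⟨j, rfl⟩, hx1⟩
    exact ⟨by positivity, hx1⟩
  have ha'I : a' ∈ Set.Icc (0 : ℝ) 1 := hA_sub ha'
  -- expected payment is Lipschitz for bounded payments
  have ep_lip : ∀ b ∈ Set.Icc (0:ℝ) 1, ∀ b' ∈ Set.Icc (0:ℝ) 1, ∀ (p : Ω → ℝ) (M : ℝ),
      0 ≤ M → (∀ ω, 0 ≤ p ω) → (∀ ω, p ω ≤ M) →
      |I.ep b p - I.ep b' p| ≤ |b - b'| * M := by
    intro b hb b' hb' p M hM hp0 hpM
    have h1 : I.ep b p - I.ep b' p = ∑ ω, (I.F b ω - I.F b' ω) * p ω := by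
      unfold ContInstance.ep
      rw [← Finset.sum_sub_distrib]
      exact Finset.sum_congr rfl fun ω _ => by ring
    rw [h1]
    calc |∑ ω, (I.F b ω - I.F b' ω) * p ω| ≤ ∑ ω, |(I.F b ω - I.F b' ω) * p ω| :=
          Finset.abs_sum_le_sum_abs _ _
      _ ≤ ∑ ω, |I.F b ω - I.F b' ω| * M := by
          refine Finset.sum_le_sum fun ω _ => ?_
          rw [abs_mul, abs_of_nonneg (hp0 ω)]
          exact mul_le_mul_of_nonneg_left (hpM ω) (abs_nonneg _)
      _ = (∑ ω, |I.F b ω - I.F b' ω|) * M := by rw [Finset.sum_mul]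
      _ ≤ |b - b'| * M := mul_le_mul_of_nonneg_right (I.F_lip b hb b' hb') hM
  have ep_shift : ∀ b ∈ Set.Icc (0:ℝ) 1, ∀ (p : Ω → ℝ) (t : ℝ),
      I.ep b (fun ω => p ω + t) = I.ep b p + t := by
    intro b hb p t
    unfold ContInstance.ep
    have h : ∑ ω, I.F b ω * (p ω + t) = ∑ ω, (I.F b ω * p ω + I.F b ω * t) :=
      Finset.sum_congr rfl fun ω _ => by ring
    rw [h, Finset.sum_add_distrib, ← Finset.sum_mul, I.F_sum b hb, one_mul]
  have ep_scale : ∀ (b : ℝ) (p : Ω → ℝ) (l : ℝ), I.ep b (fun ω => l * p ω) = l * I.ep b p := by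
    intro b p l
    unfold ContInstance.ep
    rw [Finset.mul_sum]
    exact Finset.sum_congr rfl fun ω _ => by ring
  have ep_nonneg : ∀ b ∈ Set.Icc (0:ℝ) 1, ∀ p : Ω → ℝ, (∀ ω, 0 ≤ p ω) → 0 ≤ I.ep b p := by
    intro b hb p hp0
    exact Finset.sum_nonneg fun ω _ => mul_nonneg (I.F_nonneg b hb ω) (hp0 ω)
  have ep_single : ∀ b ∈ Set.Icc (0:ℝ) 1, ∀ p : Ω → ℝ, (∀ ω, 0 ≤ p ω) → ∀ ω,
      I.F b ω * p ω ≤ I.ep b p := by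
    intro b hb p hp0 ω
    exact Finset.single_le_sum (f := fun ω => I.F b ω * p ω)
      (fun ω _ => mul_nonneg (I.F_nonneg b hb ω) (hp0 ω)) (Finset.mem_univ ω)
  -- nearest grid point
  have near : ∀ b ∈ Set.Icc (0:ℝ) 1, ∃ b' ∈ Adelta δ, |b - b'| ≤ δ / 2 := by
    intro b hb
    have hδne : δ ≠ 0 := ne_of_gt hδ
    have hNpos : (0:ℝ) < N := by exact_mod_cast hN0
    have hbδ0 : 0 ≤ b / δ := div_nonneg hb.1 (le_of_lt hδ)
    have hr0 : 0 ≤ round (b / δ) := by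
      rw [round_eq]; exact Int.floor_nonneg.mpr (by linarith)
    set j : ℕ := (round (b / δ)).toNat with hj
    have hjr' : (j : ℝ) = ((round (b / δ) : ℤ) : ℝ) := by
      have := Int.toNat_of_nonneg hr0
      exact_mod_cast congrArg (fun z : ℤ => (z : ℝ)) this
    have hbN : b / δ ≤ N := by
      have h : b / δ = b * N := by rw [hδN]; field_simp
      rw [h]
      nlinarith [hb.2]
    have hrN : ((round (b / δ) : ℤ) : ℝ) ≤ (N : ℝ) := by
      have h1 : round (b / δ) ≤ round ((N : ℝ)) := by
        rw [round_eq, round_eq]; exact Int.floor_le_floor (by linarith)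
      have h2 : round ((N:ℝ)) = (N:ℤ) := by exact_mod_cast round_natCast N
      rw [h2] at h1; exact_mod_cast h1
    refine ⟨(j : ℝ) * δ, ⟨⟨j, rfl⟩, ?_⟩, ?_⟩
    · rw [hjr']
      calc ((round (b / δ) : ℤ) : ℝ) * δ ≤ (N : ℝ) * δ :=
            mul_le_mul_of_nonneg_right hrN (le_of_lt hδ)
        _ = 1 := by rw [hδN]; field_simp
    · have h1 : b - (j:ℝ) * δ = (b / δ - ((round (b/δ) : ℤ) : ℝ)) * δ := by
        rw [hjr', sub_mul, div_mul_cancel₀ b hδne]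
      rw [h1, abs_mul, abs_of_pos hδ]
      calc |b / δ - ((round (b/δ) : ℤ) : ℝ)| * δ ≤ (1/2) * δ :=
            mul_le_mul_of_nonneg_right (abs_sub_round (b/δ)) (le_of_lt hδ)
        _ = δ / 2 := by ring
  constructor
  · -- first inclusion
    rintro q ⟨hQ, hq01⟩
    obtain ⟨p, ⟨hp0, hIC⟩, hpq⟩ := hQ
    refine ⟨?_, hq01⟩
    -- bound on p
    have hpM : ∀ ω, p ω ≤ 2 / cb := by
      intro ω
      obtain ⟨as, hasI, hasF⟩ := hs ω
      have h1 : I.ep as p ≤ 2 := by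
        have h2 := hIC as hasI
        have h3 := I.c_nonneg a ha
        have h4 := I.c_le_one as hasI
        rw [hpq] at h2
        simp only [ge_iff_le] at h2
        linarith [hq01.2]
      have h5 : cb * p ω ≤ I.F as ω * p ω :=
        mul_le_mul_of_nonneg_right hasF (hp0 ω)
      have h6 := ep_single as hasI p hp0 ω
      rw [le_div_iff₀ hcb, mul_comm]
      linarith
    set q' := I.ep a' p with hq'def
    have hc := abs_le.mp (I.c_lip a ha a' ha'I)
    by_cases hcase : q' ≤ q
    · -- shift upwards by q - q'
      have hdist : |q - q'| ≤ δ * (2 / cb) := by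
        have h1 := ep_lip a ha a' ha'I p (2/cb) (le_of_lt hcb2) hp0 hpM
        rw [hpq] at h1
        calc |q - q'| ≤ |a - a'| * (2/cb) := h1
          _ ≤ δ * (2/cb) := mul_le_mul_of_nonneg_right hd (le_of_lt hcb2)
      have hq2 := (abs_le.mp hdist).2
      refine ⟨fun ω => p ω + (q - q'),
        fun ω => by show (0:ℝ) ≤ p ω + (q - q'); linarith [hp0 ω], ?_, ?_⟩
      · intro b hb
        have hbI := hA_sub hb
        rw [ep_shift a' ha'I p (q - q'), ep_shift b hbI p (q - q')]
        have hIC' := hIC b hbI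
        rw [hpq] at hIC'
        simp only [ge_iff_le] at *
        linarith [hc.2]
      · rw [ep_shift a' ha'I p (q - q')]; ring
    · -- scale down by q / q'
      push_neg at hcase
      have hq'pos : 0 < q' := lt_of_le_of_lt hq01.1 hcase
      have hl0 : 0 ≤ q / q' := div_nonneg hq01.1 (le_of_lt hq'pos)
      have hl1 : q / q' ≤ 1 := (div_le_one hq'pos).mpr (le_of_lt hcase)
      have hepa' : q / q' * q' = q := div_mul_cancel₀ q (ne_of_gt hq'pos)
      refine ⟨fun ω => (q / q') * p ω,
        fun ω => mul_nonneg hl0 (hp0 ω), ?_, ?_⟩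
      · intro b hb
        have hbI := hA_sub hb
        rw [ep_scale a' p (q/q'), ep_scale b p (q/q')]
        have hIC' := hIC b hbI
        rw [hpq] at hIC'
        simp only [ge_iff_le] at hIC'
        have hepb0 := ep_nonneg b hbI p hp0
        have hX : 0 ≤ q - I.c a + I.c b := by linarith
        have h1 : (q/q') * I.ep b p ≤ (q/q') * (q - I.c a + I.c b) :=
          mul_le_mul_of_nonneg_left (by linarith) hl0
        have h2 : (q/q') * (q - I.c a + I.c b) ≤ q - I.c a + I.c b := by
          nlinarith [mul_nonneg (sub_nonneg.mpr hl1) hX]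
        rw [← hq'def, hepa']
        simp only [ge_iff_le]
        linarith [hc.2]
      · rw [ep_scale a' p (q/q'), ← hq'def]
        exact hepa'
  · -- second inclusion
    rintro q ⟨hQ, hq01⟩
    obtain ⟨p, hp0, hIC, hpq⟩ := hQ
    refine ⟨?_, hq01⟩
    have h2e : 2 * δ * (1 + 2 / cb) = 2 * ε := by rw [hεdef]; ring
    by_cases hbig : 1 ≤ 2 * ε
    · -- constant payment q
      have hconst : ∀ b ∈ Set.Icc (0:ℝ) 1, I.ep b (fun _ => q) = q := by
        intro b hb
        unfold ContInstance.ep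
        rw [← Finset.sum_mul, I.F_sum b hb, one_mul]
      refine ⟨fun _ => q, fun _ => hq01.1, ?_, hconst a' ha'I⟩
      intro b hb
      rw [hconst a' ha'I, hconst b hb]
      have h1 := I.c_le_one a' ha'I
      have h2 := I.c_nonneg b hb
      simp only [ge_iff_le]
      linarith
    · push_neg at hbig
      rw [hεe] at hbig
      have hx : 4 * δ * (2 / cb) ≤ cb * (2 / cb) → 4 * δ ≤ cb := by
        intro h
        have := mul_le_mul_of_nonneg_right (le_of_lt hcb) (le_of_lt hcb2)
        nlinarith [hu]
      have h4δ : 4 * δ ≤ cb := by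
        -- from 2*(δ + δ*(2/cb)) < 1 we get 2*δ*(2/cb) < 1, i.e. 4*δ < cb
        have h1 : 2 * (δ * (2/cb)) < 1 := by nlinarith
        nlinarith [hu, mul_pos hδ hcb2, sq_nonneg (2*δ - cb), mul_pos hδ hcb]
      have hMpos : (0:ℝ) ≤ 1 + 4 / cb := by positivity
      have hcd : 0 < cb - δ/2 := by linarith
      have hkey : 2 + ε ≤ (cb - δ/2) * (1 + 4/cb) := by
        have e1 : (cb - δ/2) * (1 + 4/cb) = cb + 4 - δ/2 - δ * (2/cb) := by
          field_simp; ring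
        have h9 : 4 * (δ * (2/cb)) ≤ 2 := by
          have h10 := mul_le_mul_of_nonneg_right h4δ (le_of_lt hcb2)
          rw [hu] at h10
          linarith
        rw [e1, hεe]
        linarith
      -- bound p by 1 + 4/cb
      have hpM : ∀ ω, p ω ≤ 1 + 4 / cb := by
        intro ω
        obtain ⟨as, hasI, hasF⟩ := hs ω
        obtain ⟨as', has'A, has'd⟩ := near as hasI
        have has'I := hA_sub has'A
        have hF : cb - δ/2 ≤ I.F as' ω := by
          have h1 : |I.F as ω - I.F as' ω| ≤ ∑ ω', |I.F as ω' - I.F as' ω'| :=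
            Finset.single_le_sum (f := fun ω' => |I.F as ω' - I.F as' ω'|)
              (fun ω' _ => abs_nonneg _) (Finset.mem_univ ω)
          have h2 := (I.F_lip as hasI as' has'I).trans has'd
          have h3 := (abs_le.mp (h1.trans h2)).2
          linarith
        have h5 : (cb - δ/2) * p ω ≤ I.F as' ω * p ω :=
          mul_le_mul_of_nonneg_right hF (hp0 ω)
        have h6 := ep_single as' has'I p hp0 ω
        have h7 : I.ep as' p ≤ 2 + ε := by
          have h8 := hIC as' has'A
          have h9 := I.c_nonneg a' ha'I
          have h10 := I.c_le_one as' has'I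
          rw [hpq] at h8
          simp only [ge_iff_le] at h8
          linarith [hq01.2]
        have h11 : (cb - δ/2) * p ω ≤ (cb - δ/2) * (1 + 4/cb) := by linarith
        exact le_of_mul_le_mul_left h11 hcd
      refine ⟨p, hp0, ?_, hpq⟩
      intro b hb
      obtain ⟨b', hb'A, hb'd⟩ := near b hb
      have hb'I := hA_sub hb'A
      have hIC' := hIC b' hb'A
      have hlip : |I.ep b p - I.ep b' p| ≤ (δ/2) * (1 + 4/cb) := by
        have h1 := ep_lip b hb b' hb'I p (1 + 4/cb) hMpos hp0 hpM
        calc |I.ep b p - I.ep b' p| ≤ |b - b'| * (1 + 4/cb) := h1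
          _ ≤ (δ/2) * (1 + 4/cb) := mul_le_mul_of_nonneg_right hb'd hMpos
      have hclip : |I.c b - I.c b'| ≤ δ/2 := (I.c_lip b hb b' hb'I).trans hb'd
      have hid : δ/2 + (δ/2) * (1 + 4/cb) = ε := by rw [hεdef]; ring
      have h1 := (abs_le.mp hlip).2
      have h2 := (abs_le.mp hclip).2
      simp only [ge_iff_le] at hIC' ⊢
      rw [h2e]
      linarith [h1, h2, (abs_le.mp hclip).1, hIC', hid]
end

section
/- Consider a continuous-action delegation instance which is c̄-smooth for some c̄ > 0, and let δ > 0 with 1/δ ∈ ℕ. For every feasible solution P* = {(a*_θ, q*_θ)}_{θ∈Θ} of the continuous pricing program, there exists a feasible solution P̂ of the discretized relaxed program with V(P̂) ≥ V(P*) − δ, where V({(a_θ, q_θ)}) := Σ_θ ξ_θ (q_θ − c_{a_θ}). Consequently, the optimal value of the discretized relaxed program is at least the supremum of the continuous pricing program minus δ. -/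
open Finset

namespace ContInstance

variable {Θ Ω : Type*} [Fintype Θ] [Fintype Ω]

/-- Feasibility for the continuous pricing program (direct menus in
expected-payment form with continuous actions). -/
def ContFeasible (I : ContInstance Θ Ω) (a q : Θ → ℝ) : Prop :=
  (∀ θ, a θ ∈ Set.Icc (0 : ℝ) 1) ∧ (∀ θ, q θ ∈ I.Q (a θ)) ∧
  (∀ θ θ', I.ep (a θ) (I.R θ) - q θ ≥ I.ep (a θ') (I.R θ) - q θ') ∧
  (∀ θ, 0 ≤ I.ep (a θ) (I.R θ) - q θ)

/-- Feasibility for the discretized, relaxed pricing program with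
discretization step `δ` and smoothness parameter `c̄`. -/
def DiscFeasible (I : ContInstance Θ Ω) (cb δ : ℝ) (a q : Θ → ℝ) : Prop :=
  (∀ θ, a θ ∈ Adelta δ) ∧ (∀ θ, q θ ∈ I.QepsD δ (δ * (1 + 2 / cb)) (a θ)) ∧
  (∀ θ θ', (I.ep (a θ) (I.R θ) + δ) - q θ ≥ (I.ep (a θ') (I.R θ) - δ) - q θ') ∧
  (∀ θ, 0 ≤ (I.ep (a θ) (I.R θ) + δ) - q θ)

/-- The value `V({(a_θ, q_θ)}) = Σ_θ ξ_θ (q_θ − c_{a_θ})` of a direct menu in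
expected-payment form. -/
def V (I : ContInstance Θ Ω) (a q : Θ → ℝ) : ℝ :=
  ∑ θ, I.ξ θ * (q θ - I.c (a θ))

/-- The optimal (supremum) value of the continuous pricing program. -/
noncomputable def ContOPT (I : ContInstance Θ Ω) : ℝ :=
  sSup {v | ∃ a q, I.ContFeasible a q ∧ v = I.V a q}

end ContInstance

section Aux

variable {Θ Ω : Type*} [Fintype Θ] [Fintype Ω]

lemma Adelta_subset_Icc {δ : ℝ} (hδ : 0 < δ) {x : ℝ} (hx : x ∈ Adelta δ) :
    x ∈ Set.Icc (0 : ℝ) 1 := by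
  obtain ⟨⟨j, rfl⟩, h1⟩ := hx
  exact ⟨by positivity, h1⟩

lemma ep_nonneg (I : ContInstance Θ Ω) {a : ℝ} (ha : a ∈ Set.Icc (0:ℝ) 1)
    {p : Ω → ℝ} (hp : ∀ ω, 0 ≤ p ω) : 0 ≤ I.ep a p :=
  Finset.sum_nonneg fun ω _ => mul_nonneg (I.F_nonneg a ha ω) (hp ω)

lemma ep_R_le_one (I : ContInstance Θ Ω) {a : ℝ} (ha : a ∈ Set.Icc (0:ℝ) 1)
    (θ : Θ) : I.ep a (I.R θ) ≤ 1 := by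
  calc I.ep a (I.R θ) ≤ ∑ ω, I.F a ω := Finset.sum_le_sum fun ω _ =>
        mul_le_of_le_one_right (I.F_nonneg a ha ω) (I.R_le_one θ ω)
  _ = 1 := I.F_sum a ha

lemma ep_shift (I : ContInstance Θ Ω) {a : ℝ} (ha : a ∈ Set.Icc (0:ℝ) 1)
    (p : Ω → ℝ) (t : ℝ) : I.ep a (fun ω => p ω + t) = I.ep a p + t := by
  unfold ContInstance.ep
  rw [Finset.sum_congr rfl (fun ω _ => mul_add (I.F a ω) (p ω) t),
    Finset.sum_add_distrib, ← Finset.sum_mul, I.F_sum a ha, one_mul]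

/-- Centering trick: the expected payment is `(|a-a'| M/2)`-Lipschitz for payments in `[0,M]`. -/
lemma ep_diff (I : ContInstance Θ Ω) {a a' : ℝ} (ha : a ∈ Set.Icc (0:ℝ) 1)
    (ha' : a' ∈ Set.Icc (0:ℝ) 1) {p : Ω → ℝ} {M : ℝ}
    (hp0 : ∀ ω, 0 ≤ p ω) (hpM : ∀ ω, p ω ≤ M) :
    |I.ep a p - I.ep a' p| ≤ |a - a'| * (M / 2) := by
  have hexp : I.ep a p - I.ep a' p = ∑ ω, (I.F a ω - I.F a' ω) * (p ω - M/2) := by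
    have h1 : ∑ ω, (I.F a ω - I.F a' ω) * (p ω - M/2)
        = ∑ ω, (I.F a ω * p ω) - ∑ ω, (I.F a' ω * p ω)
          - ((M/2) * ∑ ω, I.F a ω - (M/2) * ∑ ω, I.F a' ω) := by
      rw [Finset.mul_sum, Finset.mul_sum, ← Finset.sum_sub_distrib,
        ← Finset.sum_sub_distrib, ← Finset.sum_sub_distrib]
      exact Finset.sum_congr rfl fun ω _ => by ring
    rw [h1, I.F_sum a ha, I.F_sum a' ha']
    unfold ContInstance.ep
    ring
  rw [hexp]
  calc |∑ ω, (I.F a ω - I.F a' ω) * (p ω - M/2)|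
      ≤ ∑ ω, |(I.F a ω - I.F a' ω) * (p ω - M/2)| := Finset.abs_sum_le_sum_abs _ _
    _ ≤ ∑ ω, |I.F a ω - I.F a' ω| * (M/2) := by
        refine Finset.sum_le_sum fun ω _ => ?_
        rw [abs_mul]
        refine mul_le_mul_of_nonneg_left ?_ (abs_nonneg _)
        rw [abs_le]
        constructor <;> [linarith [hp0 ω]; linarith [hpM ω]]
    _ = (∑ ω, |I.F a ω - I.F a' ω|) * (M/2) := by rw [Finset.sum_mul]
    _ ≤ |a - a'| * (M/2) := by
        have hM : (0:ℝ) ≤ M / 2 := by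
          rcases isEmpty_or_nonempty Ω with h | h
          · exfalso
            have h0 := I.F_sum a ha
            rw [Finset.univ_eq_empty, Finset.sum_empty] at h0
            norm_num at h0
          · obtain ⟨ω⟩ := h
            linarith [hp0 ω, hpM ω]
        exact mul_le_mul_of_nonneg_right (I.F_lip a ha a' ha') hM

/-- Payments inducing `a` with value at most `1` are bounded by `2/cb` under smoothness. -/
lemma p_bound (I : ContInstance Θ Ω) {cb : ℝ} (hcb : 0 < cb) (hs : I.Smooth cb)
    {a : ℝ} (ha : a ∈ Set.Icc (0:ℝ) 1) {p : Ω → ℝ} (hp : p ∈ I.Pi a)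
    (hq : I.ep a p ≤ 1) (ω : Ω) : p ω ≤ 2 / cb := by
  obtain ⟨a'', ha'', hF⟩ := hs ω
  have h1 : cb * p ω ≤ I.ep a'' p := by
    calc cb * p ω ≤ I.F a'' ω * p ω := mul_le_mul_of_nonneg_right hF (hp.1 ω)
    _ ≤ ∑ ω', I.F a'' ω' * p ω' := Finset.single_le_sum
        (fun ω' _ => mul_nonneg (I.F_nonneg a'' ha'' ω') (hp.1 ω')) (Finset.mem_univ ω)
  have h2 := hp.2 a'' ha''
  have hca := I.c_nonneg a ha
  have hca'' := I.c_le_one a'' ha''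
  rw [le_div_iff₀ hcb]
  nlinarith [h1, h2, hca, hca'', hq]

/-- Rounding to the nearest grid point. -/
lemma round_ex {δ : ℝ} {N : ℕ} (hN0 : 0 < N) (hδN : δ = 1 / N) {x : ℝ}
    (hx : x ∈ Set.Icc (0:ℝ) 1) : ∃ y ∈ Adelta δ, |x - y| ≤ δ / 2 := by
  have hNpos : (0:ℝ) < N := by exact_mod_cast hN0
  have hδpos : (0:ℝ) < δ := by rw [hδN]; positivity
  set j := ⌊x * N + 1/2⌋₊ with hj
  have h1 : (j:ℝ) ≤ x * N + 1/2 := Nat.floor_le (by nlinarith [hx.1])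
  have h2 : x * N + 1/2 < (j:ℝ) + 1 := Nat.lt_floor_add_one _
  have hδN' : δ * N = 1 := by rw [hδN]; field_simp
  refine ⟨(j:ℝ) * δ, ⟨⟨j, rfl⟩, ?_⟩, ?_⟩
  · have hjN : (j:ℝ) ≤ N := by
      have hlt : (j:ℝ) < (N:ℝ) + 1 := by nlinarith [hx.2]
      exact_mod_cast Nat.lt_succ_iff.mp (by exact_mod_cast hlt)
    nlinarith [hδN', hjN, hδpos]
  · rw [abs_le]
    constructor
    · nlinarith [h2, hδN', hδpos]
    · nlinarith [h1, hδN', hδpos]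

end Aux

/-- Every feasible solution of the continuous pricing program can be turned into a
feasible solution of the discretized relaxed program losing at most `δ` in value;
consequently the optimum of the discretized relaxed program is at least the supremum
of the continuous program minus `δ`. -/
theorem stmt12 {Θ Ω : Type*} [Fintype Θ] [Fintype Ω]
    (I : ContInstance Θ Ω) (cb δ : ℝ) (hcb : 0 < cb) (hs : I.Smooth cb)
    (hδ : 0 < δ) (hN : ∃ N : ℕ, 0 < N ∧ δ = 1 / N) :
    (∀ a q, I.ContFeasible a q →
      ∃ a' q', I.DiscFeasible cb δ a' q' ∧ I.V a' q' ≥ I.V a q - δ) ∧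
    sSup {v | ∃ a q, I.DiscFeasible cb δ a q ∧ v = I.V a q} ≥ I.ContOPT - δ := by
  obtain ⟨N, hN0, hδN⟩ := hN
  have part1 : ∀ a q, I.ContFeasible a q →
      ∃ a' q', I.DiscFeasible cb δ a' q' ∧ I.V a' q' ≥ I.V a q - δ := by
    intro a q hf
    obtain ⟨hIcc, hQ, hIC, hIR⟩ := hf
    choose p hp hep using hQ
    choose a' ha'mem ha'near using fun θ => round_ex hN0 hδN (hIcc θ)
    have ha'Icc : ∀ θ, a' θ ∈ Set.Icc (0:ℝ) 1 := fun θ => Adelta_subset_Icc hδ (ha'mem θ)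
    have hq_le : ∀ θ, q θ ≤ 1 := fun θ =>
      le_trans (by linarith [hIR θ]) (ep_R_le_one I (hIcc θ) θ)
    have hpM : ∀ θ ω, p θ ω ≤ 2 / cb := fun θ ω =>
      p_bound I hcb hs (hIcc θ) (hp θ) (by rw [hep θ]; exact hq_le θ) ω
    have hcdiff : ∀ θ, |I.c (a θ) - I.c (a' θ)| ≤ δ / 2 := fun θ =>
      le_trans (I.c_lip (a θ) (hIcc θ) (a' θ) (ha'Icc θ)) (ha'near θ)
    have hepp : ∀ θ, |I.ep (a θ) (p θ) - I.ep (a' θ) (p θ)| ≤ (δ/2) * ((2/cb)/2) := by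
      intro θ
      refine le_trans (ep_diff I (hIcc θ) (ha'Icc θ) (hp θ).1 (hpM θ)) ?_
      exact mul_le_mul_of_nonneg_right (ha'near θ) (by positivity)
    have hepR : ∀ θ τ, |I.ep (a θ) (I.R τ) - I.ep (a' θ) (I.R τ)| ≤ (δ/2) * (1/2) := by
      intro θ τ
      refine le_trans (ep_diff I (hIcc θ) (ha'Icc θ) (I.R_nonneg τ) (I.R_le_one τ)) ?_
      exact mul_le_mul_of_nonneg_right (ha'near θ) (by norm_num)
    have hdcb : (0:ℝ) ≤ δ / cb := by positivity
    refine ⟨a', fun θ => q θ + δ/2, ⟨fun θ => ha'mem θ, ?_, ?_, ?_⟩, ?_⟩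
    · -- QepsD membership
      intro θ
      have hIC' := (hp θ).2 (a' θ) (ha'Icc θ)
      have ht : 0 ≤ (q θ + δ/2) - I.ep (a' θ) (p θ) := by
        have := abs_le.mp (hcdiff θ)
        rw [hep θ] at hIC'
        linarith [this.1, this.2, hIC']
      refine ⟨fun ω => p θ ω + ((q θ + δ/2) - I.ep (a' θ) (p θ)),
        fun ω => by linarith [(hp θ).1 ω, ht], ?_, ?_⟩
      · intro b hb
        have hbIcc : b ∈ Set.Icc (0:ℝ) 1 := Adelta_subset_Icc hδ hb
        rw [ep_shift I (ha'Icc θ), ep_shift I hbIcc]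
        have h3 := (hp θ).2 b hbIcc
        have h4 := abs_le.mp (hepp θ)
        have h5 := abs_le.mp (hcdiff θ)
        have h6 : δ * (1 + 2/cb) = δ + 2 * (δ/cb) := by ring
        have h7 : (δ/2) * ((2/cb)/2) = (1/2) * (δ/cb) := by ring
        rw [h6]
        linarith [h3, h4.1, h4.2, h5.1, h5.2, hdcb, h7 ▸ h4.2, h7 ▸ h4.1]
      · rw [ep_shift I (ha'Icc θ)]; ring
    · -- type IC
      intro θ θ'
      have h1 := abs_le.mp (hepR θ θ)
      have h2 := abs_le.mp (hepR θ' θ)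
      have h3 := hIC θ θ'
      linarith [h1.1, h1.2, h2.1, h2.2, h3]
    · -- IR
      intro θ
      have h1 := abs_le.mp (hepR θ θ)
      linarith [h1.1, h1.2, hIR θ]
    · -- value
      have hterm : ∀ θ, I.ξ θ * (q θ - I.c (a θ)) ≤ I.ξ θ * ((q θ + δ/2) - I.c (a' θ)) := by
        intro θ
        have h5 := abs_le.mp (hcdiff θ)
        exact mul_le_mul_of_nonneg_left (by linarith [h5.1, h5.2]) (I.ξ_nonneg θ)
      have hsum : (∑ θ, I.ξ θ * (q θ - I.c (a θ)))
          ≤ ∑ θ, I.ξ θ * ((q θ + δ/2) - I.c (a' θ)) :=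
        Finset.sum_le_sum fun θ _ => hterm θ
      unfold ContInstance.V
      beta_reduce
      linarith [hsum]
  refine ⟨part1, ?_⟩
  -- Second part
  -- the continuous program is feasible (nonempty value set)
  have hcont : ContinuousOn I.c (Set.Icc (0:ℝ) 1) := by
    have : LipschitzOnWith 1 I.c (Set.Icc (0:ℝ) 1) := by
      rw [lipschitzOnWith_iff_dist_le_mul]
      intro x hx y hy
      rw [Real.dist_eq, Real.dist_eq]
      simpa using I.c_lip x hx y hy
    exact this.continuousOn
  obtain ⟨a₀, ha₀I, ha₀min⟩ := isCompact_Icc.exists_isMinOn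
    (Set.nonempty_Icc.mpr (by norm_num : (0:ℝ) ≤ 1)) hcont
  have hep0 : ∀ b ∈ Set.Icc (0:ℝ) 1, I.ep b (fun _ => (0:ℝ)) = 0 := by
    intro b _; simp [ContInstance.ep]
  have hfeas0 : I.ContFeasible (fun _ => a₀) (fun _ => 0) := by
    refine ⟨fun _ => ha₀I, fun θ => ⟨fun _ => 0, ⟨fun ω => le_refl 0, ?_⟩, hep0 a₀ ha₀I⟩,
      fun θ θ' => le_refl _, fun θ => ?_⟩
    · intro b hb
      rw [hep0 a₀ ha₀I, hep0 b hb]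
      have := isMinOn_iff.mp ha₀min b hb
      linarith
    · have := ep_nonneg I ha₀I (fun ω => I.R_nonneg θ ω)
      show (0:ℝ) ≤ I.ep a₀ (I.R θ) - 0
      linarith
  have hne : {v | ∃ a q, I.ContFeasible a q ∧ v = I.V a q}.Nonempty :=
    ⟨_, _, _, hfeas0, rfl⟩
  have hbddD : BddAbove {v | ∃ a q, I.DiscFeasible cb δ a q ∧ v = I.V a q} := by
    refine ⟨1 + δ, fun v hv => ?_⟩
    obtain ⟨a, q, ⟨hA, _, _, hIR⟩, rfl⟩ := hv
    have hterm : ∀ θ, I.ξ θ * (q θ - I.c (a θ)) ≤ I.ξ θ * (1 + δ) := by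
      intro θ
      have haI : a θ ∈ Set.Icc (0:ℝ) 1 := Adelta_subset_Icc hδ (hA θ)
      have h1 : q θ ≤ 1 + δ := by linarith [hIR θ, ep_R_le_one I haI θ]
      have h2 := I.c_nonneg (a θ) haI
      exact mul_le_mul_of_nonneg_left (by linarith) (I.ξ_nonneg θ)
    calc I.V a q ≤ ∑ θ, I.ξ θ * (1 + δ) := Finset.sum_le_sum fun θ _ => hterm θ
      _ = 1 + δ := by rw [← Finset.sum_mul, I.ξ_sum, one_mul]
  have hkey : I.ContOPT ≤ sSup {v | ∃ a q, I.DiscFeasible cb δ a q ∧ v = I.V a q} + δ := by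
    refine csSup_le hne ?_
    rintro v ⟨a, q, hf, rfl⟩
    obtain ⟨a', q', hf', hv⟩ := part1 a q hf
    have hmem : I.V a' q' ∈ {v | ∃ a q, I.DiscFeasible cb δ a q ∧ v = I.V a q} :=
      ⟨a', q', hf', rfl⟩
    have := le_csSup hbddD hmem
    linarith
  linarith
end

section
/- For every even integer n ≥ 2, there exists a delegation instance with n user types in which some feasible menu of randomized payment schemes achieves value at least (n/16) times the value of every feasible direct menu of deterministic payment schemes, and in which the value achieved by that randomized menu is strictly positive. Concretely, for the instance constructed in the paper, with S := Σ_{k∈[n/2]} 2^{k+1}, there is a feasible menu of randomized payment schemes with value at least (n/2)/S, while every feasible direct menu of deterministic payment schemes has value at most 8/S. -/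
open Finset

namespace DelegationInstance

variable {Θ Ω A : Type*} [Fintype Θ] [Fintype Ω] [Fintype A]

/-- Feasibility of a menu of randomized payment schemes
`Φ = {(φ^θ, (p_{θ,a})_a)}_θ`: each `φ^θ` is a distribution on `A ∪ {∅}`, payments are
nonnegative, and provider IC, user IC and user IR hold. -/
def RandFeasible (I : DelegationInstance Θ Ω A)
    (φ : Θ → Option A → ℝ) (p : Θ → A → Ω → ℝ) : Prop :=
  (∀ θ o, 0 ≤ φ θ o) ∧ (∀ θ, ∑ o : Option A, φ θ o = 1) ∧
  (∀ θ a ω, 0 ≤ p θ a ω) ∧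
  (∀ θ a a', φ θ (some a) * (I.ep a (p θ a) - I.c a) ≥
    φ θ (some a) * (I.ep a' (p θ a) - I.c a')) ∧
  (∀ θ θ', ∑ a, φ θ (some a) * I.ep a (fun ω => I.R θ ω - p θ a ω) ≥
    ∑ a, φ θ' (some a) * I.ep a (fun ω => I.R θ ω - p θ' a ω)) ∧
  (∀ θ, 0 ≤ ∑ a, φ θ (some a) * I.ep a (fun ω => I.R θ ω - p θ a ω))

/-- Expected provider value of a menu of randomized payment schemes. -/
def randValue (I : DelegationInstance Θ Ω A)
    (φ : Θ → Option A → ℝ) (p : Θ → A → Ω → ℝ) : ℝ :=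
  ∑ θ, I.ξ θ * ∑ a, φ θ (some a) * (I.ep a (p θ a) - I.c a)

end DelegationInstance


open Finset

namespace Stmt14Aux

noncomputable section

/-- `S n = Σ_{k=1}^{n/2} 2^(k+1)`. -/
def S (n : ℕ) : ℝ := ∑ k ∈ Finset.Icc 1 (n / 2), (2 : ℝ) ^ (k + 1)

/-- the "ladder" values -/
def w (n : ℕ) (j : ℕ) : ℝ := (2 : ℝ) ^ (j + 1) / S n

lemma h_pos {n : ℕ} (hn : 2 ≤ n) : 1 ≤ n / 2 := by omega

lemma h_lt {n : ℕ} (hn : 2 ≤ n) : n / 2 < n := by omega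

lemma S_pos {n : ℕ} (hn : 2 ≤ n) : 0 < S n := by
  apply Finset.sum_pos (fun k _ => by positivity)
  exact ⟨1, by simp [Finset.mem_Icc]; omega⟩

lemma w_nonneg {n : ℕ} (hn : 2 ≤ n) (j : ℕ) : 0 ≤ w n j := by
  have := S_pos hn; unfold w; positivity

lemma w_pos {n : ℕ} (hn : 2 ≤ n) (j : ℕ) : 0 < w n j := by
  have := S_pos hn; unfold w; positivity

lemma w_mono {n : ℕ} (hn : 2 ≤ n) {i j : ℕ} (hij : i ≤ j) : w n i ≤ w n j := by
  have := S_pos hn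
  unfold w
  gcongr
  norm_num

lemma w_le_one {n : ℕ} (hn : 2 ≤ n) {j : ℕ} (h1 : 1 ≤ j) (h2 : j ≤ n / 2) :
    w n j ≤ 1 := by
  have hS := S_pos hn
  rw [w, div_le_one hS]
  calc (2:ℝ) ^ (j+1) ≤ ∑ k ∈ Finset.Icc 1 (n / 2), (2 : ℝ) ^ (k + 1) := by
        apply Finset.single_le_sum (f := fun k => (2:ℝ)^(k+1)) (fun k _ => by positivity)
        simp [Finset.mem_Icc]; omega
    _ = S n := rfl

lemma geo_exact : ∀ (N m : ℕ), m ≤ N →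
    ∑ k ∈ Finset.Icc m N, (2⁻¹ : ℝ) ^ k = 2 * (2⁻¹:ℝ) ^ m - 2 * (2⁻¹:ℝ) ^ (N + 1) := by
  intro N
  induction N with
  | zero =>
    intro m hm
    interval_cases m
    norm_num
  | succ N ih =>
    intro m hm
    rcases Nat.lt_or_ge m (N+1) with h | h
    · rw [Finset.sum_Icc_succ_top (by omega), ih m (by omega), pow_succ (n := N+1)]
      ring
    · have hm' : m = N + 1 := by omega
      subst hm'
      rw [Finset.Icc_self, Finset.sum_singleton, pow_succ (n := N+1)]
      ring

lemma geo_le (m N : ℕ) : ∑ k ∈ Finset.Icc m N, (2⁻¹ : ℝ) ^ k ≤ 2 * (2⁻¹:ℝ) ^ m := by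
  rcases le_or_gt m N with h | h
  · rw [geo_exact N m h]
    have : (0:ℝ) ≤ 2 * (2⁻¹:ℝ) ^ (N+1) := by positivity
    linarith
  · rw [Finset.Icc_eq_empty (by omega), Finset.sum_empty]
    positivity

lemma geo_one {h : ℕ} : ∑ k ∈ Finset.Icc 1 h, (2⁻¹ : ℝ) ^ k = 1 - (2⁻¹:ℝ) ^ h := by
  induction h with
  | zero => simp
  | succ N ih =>
    rw [Finset.sum_Icc_succ_top (by omega), ih, pow_succ]
    ring

lemma w_mul_geo {n : ℕ} (j : ℕ) : w n j * (2 * (2⁻¹:ℝ) ^ j) = 4 / S n := by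
  have h2 : ((2:ℝ) ^ j) ≠ 0 := by positivity
  have key : (2⁻¹:ℝ)^j * 2^j = 1 := by rw [inv_pow, inv_mul_cancel₀ h2]
  rw [w, pow_succ]
  linear_combination (4 / S n) * key

lemma term_eq {n : ℕ} (j : ℕ) : (2⁻¹:ℝ) ^ j * (w n j / 2) = 1 / S n := by
  have h2 : ((2:ℝ) ^ j) ≠ 0 := by positivity
  have key : (2⁻¹:ℝ)^j * 2^j = 1 := by rw [inv_pow, inv_mul_cancel₀ h2]
  rw [w, pow_succ]
  linear_combination (1 / S n) * key


section Inst

variable (n : ℕ)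

/-- abbreviation: the "real" levels are `1..n/2`; index 0 and indices `> n/2` are dummies. -/
def I (hn : 2 ≤ n) : DelegationInstance (Fin n) (Fin n) (Fin n) where
  ξ θ := if θ.val = 0 then (2⁻¹ : ℝ) ^ (n / 2) else
    if θ.val ≤ n / 2 then (2⁻¹ : ℝ) ^ θ.val else 0
  F a ω := if 1 ≤ a.val ∧ a.val ≤ n / 2 then (if ω = a then 1 else 0)
    else (if ω.val = 0 then 1 else 0)
  R θ ω := if 1 ≤ θ.val ∧ θ.val ≤ n / 2 then
      (if ω.val = 0 then w n θ.val else if ω = θ then w n (n / 2) else 0)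
    else 0
  c a := if 1 ≤ a.val ∧ a.val ≤ n / 2 then w n (n / 2) else 0
  ξ_nonneg := by
    intro θ
    split_ifs <;> positivity
  ξ_sum := by
    haveI : NeZero n := ⟨by omega⟩
    have hrw : ∀ θ : Fin n, (if θ.val = 0 then (2⁻¹ : ℝ) ^ (n / 2) else
        if θ.val ≤ n / 2 then (2⁻¹ : ℝ) ^ θ.val else 0) =
        (fun j : ℕ => if j = 0 then (2⁻¹ : ℝ) ^ (n / 2) else
        if j ≤ n / 2 then (2⁻¹ : ℝ) ^ j else 0) θ.val := fun θ => rfl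
    calc ∑ θ : Fin n, _ = ∑ j ∈ Finset.range n, (if j = 0 then (2⁻¹ : ℝ) ^ (n / 2) else
        if j ≤ n / 2 then (2⁻¹ : ℝ) ^ j else 0) := by
          rw [← Fin.sum_univ_eq_sum_range]
      _ = 1 := by
          rw [Finset.range_eq_Ico, Finset.sum_eq_sum_Ico_succ_bot (by omega : 0 < n)]
          simp only [if_pos rfl]
          have : ∀ j ∈ Finset.Ico 1 n, (if j = 0 then (2⁻¹ : ℝ) ^ (n / 2) else
              if j ≤ n / 2 then (2⁻¹ : ℝ) ^ j else 0) =
              (if j ≤ n / 2 then (2⁻¹ : ℝ) ^ j else 0) := by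
            intro j hj
            rw [Finset.mem_Ico] at hj
            rw [if_neg (by omega)]
          rw [Finset.sum_congr rfl this, ← Finset.sum_filter]
          have hfil : (Finset.Ico 1 n).filter (fun j => j ≤ n / 2) = Finset.Icc 1 (n / 2) := by
            ext j
            simp only [Finset.mem_filter, Finset.mem_Ico, Finset.mem_Icc]
            omega
          rw [hfil, geo_one]
          norm_num
  F_nonneg := by
    intro a ω
    split_ifs <;> norm_num
  F_sum := by
    intro a
    haveI : NeZero n := ⟨by omega⟩
    by_cases ha : 1 ≤ a.val ∧ a.val ≤ n / 2
    · simp only [if_pos ha]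
      simp
    · simp only [if_neg ha]
      have : ∀ ω : Fin n, (if ω.val = 0 then (1:ℝ) else 0) = (if ω = 0 then (1:ℝ) else 0) := by
        intro ω
        by_cases hω : ω = 0
        · subst hω; simp
        · rw [if_neg hω, if_neg (fun hc => hω (Fin.ext (by simp [hc])))]
      simp [this]
  R_nonneg := by
    intro θ ω
    have := S_pos hn
    split_ifs <;> first | exact w_nonneg hn _ | norm_num
  R_le_one := by
    intro θ ω
    have h1 := w_le_one hn (le_refl  1) (h_pos hn)
    split_ifs with h a b
    · exact w_le_one hn h.1 h.2
    · exact w_le_one hn (h_pos hn) (le_refl _)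
    · norm_num
    · norm_num
  c_nonneg := by
    intro a
    have := w_nonneg hn (n / 2)
    split_ifs
    · exact this
    · norm_num
  c_le_one := by
    intro a
    split_ifs
    · exact w_le_one hn (h_pos hn) (le_refl _)
    · norm_num

end Inst


section Menus

open DelegationInstance

/-- real types/actions -/
abbrev rl (n : ℕ) (x : Fin n) : Prop := 1 ≤ x.val ∧ x.val ≤ n / 2

set_option linter.unusedSectionVars false

variable {n : ℕ} (hn : 2 ≤ n)
include hn

lemma val_eq_zero {x : Fin n} (hx : x.val = 0) : x = (haveI : NeZero n := ⟨by omega⟩; (0 : Fin n)) := by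
  haveI : NeZero n := ⟨by omega⟩
  exact Fin.ext (by simp [hx])

lemma zero_not_rl : ¬ rl n (haveI : NeZero n := ⟨by omega⟩; (0 : Fin n)) := by
  haveI : NeZero n := ⟨by omega⟩
  simp [rl]

lemma ep_nonreal {a : Fin n} (ha : ¬ rl n a) (q : Fin n → ℝ) :
    (I n hn).ep a q = q (haveI : NeZero n := ⟨by omega⟩; (0 : Fin n)) := by
  haveI : NeZero n := ⟨by omega⟩
  unfold DelegationInstance.ep
  have : ∀ ω : Fin n, (I n hn).F a ω * q ω = (if ω = 0 then q ω else 0) := by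
    intro ω
    show (if 1 ≤ a.val ∧ a.val ≤ n / 2 then _ else _) * q ω = _
    rw [if_neg ha]
    by_cases hω : ω = (0 : Fin n)
    · subst hω; simp
    · rw [if_neg (fun hc => hω (val_eq_zero hn hc)), if_neg hω, zero_mul]
  rw [Finset.sum_congr rfl (fun ω _ => this ω), Finset.sum_ite_eq' Finset.univ (0 : Fin n)]
  simp

lemma ep_real {a : Fin n} (ha : rl n a) (q : Fin n → ℝ) :
    (I n hn).ep a q = q a := by
  unfold DelegationInstance.ep
  have : ∀ ω : Fin n, (I n hn).F a ω * q ω = (if ω = a then q ω else 0) := by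
    intro ω
    show (if 1 ≤ a.val ∧ a.val ≤ n / 2 then _ else _) * q ω = _
    rw [if_pos ha]
    by_cases hω : ω = a
    · subst hω; simp
    · rw [if_neg hω, if_neg hω, zero_mul]
  rw [Finset.sum_congr rfl (fun ω _ => this ω), Finset.sum_ite_eq' Finset.univ a]
  simp

lemma c_real {a : Fin n} (ha : rl n a) : (I n hn).c a = w n (n / 2) := if_pos ha

lemma c_nonreal {a : Fin n} (ha : ¬ rl n a) : (I n hn).c a = 0 := if_neg ha

lemma R_zero {θ : Fin n} :
    (I n hn).R θ (haveI : NeZero n := ⟨by omega⟩; (0 : Fin n)) =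
      if rl n θ then w n θ.val else 0 := by
  haveI : NeZero n := ⟨by omega⟩
  show (if 1 ≤ θ.val ∧ θ.val ≤ n / 2 then _ else _) = _
  by_cases hθ : rl n θ
  · rw [if_pos hθ, if_pos hθ, if_pos (Fin.val_zero n)]
  · rw [if_neg hθ, if_neg hθ]

lemma R_at_real {θ a : Fin n} (ha : rl n a) :
    (I n hn).R θ a = if θ = a ∧ rl n θ then w n (n / 2) else 0 := by
  show (if 1 ≤ θ.val ∧ θ.val ≤ n / 2 then _ else _) = _
  by_cases hθ : rl n θ
  · rw [if_pos hθ]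
    rw [if_neg (by omega : ¬ a.val = 0)]
    by_cases he : a = θ
    · rw [if_pos he, if_pos ⟨he.symm, hθ⟩]
    · rw [if_neg he, if_neg (fun hc => he hc.1.symm)]
  · rw [if_neg hθ, if_neg (fun hc => hθ hc.2)]

lemma R_le_wh (θ ω : Fin n) : (I n hn).R θ ω ≤ w n (n / 2) := by
  have h0 := w_nonneg hn (n / 2)
  show (if 1 ≤ θ.val ∧ θ.val ≤ n / 2 then _ else _) ≤ _
  split_ifs with h1 h2 h3
  · exact w_mono hn h1.2
  · exact le_refl _
  · exact h0
  · exact h0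

lemma R_nonreal {θ : Fin n} (hθ : ¬ rl n θ) (ω : Fin n) : (I n hn).R θ ω = 0 := by
  show (if 1 ≤ θ.val ∧ θ.val ≤ n / 2 then _ else _) = 0
  rw [if_neg hθ]

/-- The randomized menu: distribution over options. -/
def φm (n : ℕ) : Fin n → Option (Fin n) → ℝ := fun θ o =>
  if 1 ≤ θ.val ∧ θ.val ≤ n / 2 then
    match o with
    | none => w n θ.val / (2 * w n (n / 2))
    | some a => if a.val = 0 then 1 / 2 else
        if a = θ then (w n (n / 2) - w n θ.val) / (2 * w n (n / 2)) else 0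
  else match o with
    | none => 1
    | some _ => 0

/-- The randomized menu: payments. -/
def pm (n : ℕ) : Fin n → Fin n → Fin n → ℝ := fun θ a ω =>
  if 1 ≤ θ.val ∧ θ.val ≤ n / 2 then
    (if a.val = 0 ∧ ω.val = 0 then w n θ.val else
     if a = θ ∧ ω = θ then w n (n / 2) else 0)
  else 0

omit hn in
lemma sum_two_ite {β : Type*} [Fintype β] [DecidableEq β] {i j : β} (hij : i ≠ j)
    (x y : ℝ) (X : β → ℝ) :
    ∑ a, (if a = i then x else if a = j then y else 0) * X a = x * X i + y * X j := by
  have hpt : ∀ a : β, (if a = i then x else if a = j then y else 0) * X a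
      = (if a = i then x * X a else 0) + (if a = j then y * X a else 0) := by
    intro a
    by_cases h1 : a = i
    · subst h1
      rw [if_pos rfl, if_pos rfl, if_neg hij, add_zero]
    · rw [if_neg h1, if_neg h1, zero_add]
      by_cases h2 : a = j
      · subst h2; rw [if_pos rfl, if_pos rfl]
      · rw [if_neg h2, if_neg h2, zero_mul]
  rw [Finset.sum_congr rfl (fun a _ => hpt a), Finset.sum_add_distrib,
    Finset.sum_ite_eq' Finset.univ i, Finset.sum_ite_eq' Finset.univ j]
  simp

lemma rand_sum {θ : Fin n} (hθ : rl n θ) (X : Fin n → ℝ) :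
    ∑ a, φm n θ (some a) * X a =
      (1 / 2) * X (haveI : NeZero n := ⟨by omega⟩; (0 : Fin n)) +
      ((w n (n / 2) - w n θ.val) / (2 * w n (n / 2))) * X θ := by
  haveI : NeZero n := ⟨by omega⟩
  have h0θ : (0 : Fin n) ≠ θ := by
    intro hc
    have := hθ.1
    rw [← hc] at this
    simp at this
  have hpt : ∀ a : Fin n, φm n θ (some a) =
      (if a = 0 then 1 / 2 else if a = θ then (w n (n / 2) - w n θ.val) / (2 * w n (n / 2)) else 0) := by
    intro a
    by_cases ha : a = (0 : Fin n)
    · subst ha; simp [φm, hθ, rl]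
    · have ha' : ¬ a.val = 0 := fun hc => ha (val_eq_zero hn hc)
      simp only [φm, if_pos (show 1 ≤ θ.val ∧ θ.val ≤ n / 2 from hθ)]
      rw [if_neg ha', if_neg ha]
  rw [Finset.sum_congr rfl (fun a _ => by rw [hpt a])]
  exact sum_two_ite h0θ _ _ X

lemma rand_sum_dummy {θ : Fin n} (hθ : ¬ rl n θ) (X : Fin n → ℝ) :
    ∑ a, φm n θ (some a) * X a = 0 := by
  apply Finset.sum_eq_zero
  intro a _
  have : φm n θ (some a) = 0 := by
    show (if 1 ≤ θ.val ∧ θ.val ≤ n / 2 then _ else _) = (0:ℝ)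
    rw [if_neg hθ]
  rw [this, zero_mul]

end Menus


section Feas

open DelegationInstance

set_option linter.unusedSectionVars false

variable {n : ℕ} (hn : 2 ≤ n)
include hn

lemma pm_zero_eq {θ : Fin n} (hθ : rl n θ) :
    pm n θ (haveI : NeZero n := ⟨by omega⟩; (0 : Fin n)) =
      fun ω => if ω = (haveI : NeZero n := ⟨by omega⟩; (0 : Fin n)) then w n θ.val else 0 := by
  haveI : NeZero n := ⟨by omega⟩
  funext ω
  show (if 1 ≤ θ.val ∧ θ.val ≤ n / 2 then _ else _) = _
  rw [if_pos hθ]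
  by_cases hω : ω = (0 : Fin n)
  · subst hω
    rw [if_pos ⟨Fin.val_zero n, Fin.val_zero n⟩, if_pos rfl]
  · have hω' : ¬ ω.val = 0 := fun hc => hω (val_eq_zero hn hc)
    rw [if_neg (fun hc => hω' hc.2), if_neg hω]
    have hθ0 : ¬ (0 : Fin n) = θ := by
      intro hc; have := hθ.1; rw [← hc] at this; simp at this
    rw [if_neg (fun hc => hθ0 hc.1)]

lemma pm_theta_eq {θ : Fin n} (hθ : rl n θ) :
    pm n θ θ = fun ω => if ω = θ then w n (n / 2) else 0 := by
  haveI : NeZero n := ⟨by omega⟩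
  funext ω
  show (if 1 ≤ θ.val ∧ θ.val ≤ n / 2 then _ else _) = _
  rw [if_pos hθ]
  have hθv : ¬ θ.val = 0 := by omega
  by_cases hω : ω = θ
  · subst hω
    rw [if_neg (fun hc => hθv hc.1), if_pos ⟨rfl, rfl⟩, if_pos rfl]
  · rw [if_neg (fun (hc : θ.val = 0 ∧ ω.val = 0) => hθv hc.1),
      if_neg (fun hc => hω hc.2), if_neg hω]

lemma pm_nonneg_all (θ a ω : Fin n) : 0 ≤ pm n θ a ω := by
  show (0:ℝ) ≤ (if 1 ≤ θ.val ∧ θ.val ≤ n / 2 then _ else _)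
  have h1 := w_nonneg hn θ.val
  have h2 := w_nonneg hn (n / 2)
  split_ifs <;> first | exact h1 | exact h2 | norm_num

lemma pm_dummy {θ : Fin n} (hθ : ¬ rl n θ) (a : Fin n) : pm n θ a = 0 := by
  funext ω
  show (if 1 ≤ θ.val ∧ θ.val ≤ n / 2 then _ else _) = (0:ℝ)
  rw [if_neg hθ]

lemma φm_nonneg (θ : Fin n) (o : Option (Fin n)) : 0 ≤ φm n θ o := by
  have h1 := w_nonneg hn θ.val
  have h2 := w_pos hn (n / 2)
  have h3 : w n θ.val ≤ w n (n / 2) ∨ True := Or.inr trivial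
  unfold φm
  by_cases hθ : 1 ≤ θ.val ∧ θ.val ≤ n / 2
  · rw [if_pos hθ]
    match o with
    | none => positivity
    | some a =>
      show (0:ℝ) ≤ if a.val = 0 then 1 / 2 else
        if a = θ then (w n (n / 2) - w n θ.val) / (2 * w n (n / 2)) else 0
      have hm : w n θ.val ≤ w n (n / 2) := w_mono hn hθ.2
      split_ifs
      · norm_num
      · apply div_nonneg (by linarith) (by linarith)
      · exact le_refl _
  · rw [if_neg hθ]
    match o with
    | none => norm_num
    | some a => norm_num

lemma φm_some_real {θ a : Fin n} (hθ : rl n θ) :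
    φm n θ (some a) = (if a.val = 0 then 1 / 2 else
      if a = θ then (w n (n / 2) - w n θ.val) / (2 * w n (n / 2)) else 0) := by
  show (if 1 ≤ θ.val ∧ θ.val ≤ n / 2 then _ else _) = _
  rw [if_pos hθ]

lemma φm_some_dummy {θ : Fin n} (hθ : ¬ rl n θ) (a : Fin n) : φm n θ (some a) = 0 := by
  show (if 1 ≤ θ.val ∧ θ.val ≤ n / 2 then _ else _) = (0:ℝ)
  rw [if_neg hθ]

lemma φm_none_real {θ : Fin n} (hθ : rl n θ) :
    φm n θ none = w n θ.val / (2 * w n (n / 2)) := by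
  show (if 1 ≤ θ.val ∧ θ.val ≤ n / 2 then _ else _) = _
  rw [if_pos hθ]

lemma φm_none_dummy {θ : Fin n} (hθ : ¬ rl n θ) : φm n θ none = 1 := by
  show (if 1 ≤ θ.val ∧ θ.val ≤ n / 2 then _ else _) = _
  rw [if_neg hθ]

/-- user utility of type θ for option of type θ' -/
lemma rand_util_real {θ θ' : Fin n} (hθ' : rl n θ') :
    ∑ a, φm n θ' (some a) * (I n hn).ep a (fun ω => (I n hn).R θ ω - pm n θ' a ω) =
      (1 / 2) * ((I n hn).R θ (haveI : NeZero n := ⟨by omega⟩; (0 : Fin n)) - w n θ'.val) +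
      ((w n (n / 2) - w n θ'.val) / (2 * w n (n / 2))) * ((I n hn).R θ θ' - w n (n / 2)) := by
  haveI : NeZero n := ⟨by omega⟩
  rw [rand_sum hn hθ' (fun a => (I n hn).ep a (fun ω => (I n hn).R θ ω - pm n θ' a ω))]
  rw [ep_nonreal hn (zero_not_rl hn) , ep_real hn hθ']
  rw [pm_zero_eq hn hθ', pm_theta_eq hn hθ']
  simp

lemma rand_util_own (θ : Fin n) :
    ∑ a, φm n θ (some a) * (I n hn).ep a (fun ω => (I n hn).R θ ω - pm n θ a ω) = 0 := by
  by_cases hθ : rl n θ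
  · rw [rand_util_real hn hθ, R_zero hn, if_pos hθ, R_at_real hn hθ, if_pos ⟨rfl, hθ⟩]
    ring
  · exact rand_sum_dummy hn hθ _

lemma rand_util_le (θ θ' : Fin n) :
    ∑ a, φm n θ' (some a) * (I n hn).ep a (fun ω => (I n hn).R θ ω - pm n θ' a ω) ≤ 0 := by
  haveI : NeZero n := ⟨by omega⟩
  by_cases hθ' : rl n θ'
  · rw [rand_util_real hn hθ']
    have hwh := w_pos hn (n / 2)
    have hw' := w_mono hn hθ'.2
    have hkey : ((w n (n / 2) - w n θ'.val) / (2 * w n (n / 2))) * (0 - w n (n / 2)) =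
        -((w n (n / 2) - w n θ'.val) / 2) := by
      field_simp
      ring
    by_cases hθ : rl n θ
    · rw [R_zero hn, if_pos hθ, R_at_real hn hθ']
      by_cases he : θ = θ'
      · rw [if_pos ⟨he, hθ⟩]
        subst he
        ring_nf
        exact le_refl _
      · rw [if_neg (fun hc => he hc.1)]
        have hmθ := w_mono hn hθ.2
        linarith [hkey]
    · rw [R_zero hn, if_neg hθ, R_nonreal hn hθ θ']
      have h1 := w_nonneg hn θ'.val
      linarith [hkey]
  · rw [rand_sum_dummy hn hθ']

theorem randFeas : (I n hn).RandFeasible (φm n) (pm n) := by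
  haveI : NeZero n := ⟨by omega⟩
  have hwh := w_pos hn (n / 2)
  refine ⟨φm_nonneg hn, ?_, fun θ a ω => pm_nonneg_all hn θ a ω, ?_, ?_, ?_⟩
  · -- distribution
    intro θ
    rw [Fintype.sum_option]
    by_cases hθ : rl n θ
    · have : ∑ a, φm n θ (some a) = ∑ a, φm n θ (some a) * (fun _ : Fin n => (1:ℝ)) a := by
        simp
      rw [this, rand_sum hn hθ, φm_none_real hn hθ]
      field_simp
      ring
    · rw [Finset.sum_eq_zero (fun a _ => φm_some_dummy hn hθ a), φm_none_dummy hn hθ]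
      norm_num
  · -- provider IC
    intro θ a a'
    by_cases hθ : rl n θ
    swap
    · rw [φm_some_dummy hn hθ a, zero_mul, zero_mul]
    by_cases ha0 : a = (0:Fin n)
    · -- engine-free component: the L action at index 0
      subst ha0
      apply mul_le_mul_of_nonneg_left ?_ (φm_nonneg hn θ (some 0))
      rw [pm_zero_eq hn hθ, ep_nonreal hn (zero_not_rl hn), if_pos rfl,
        c_nonreal hn (zero_not_rl hn)]
      by_cases ha' : rl n a'
      · rw [ep_real hn ha', c_real hn ha']
        have : ¬ a' = (0:Fin n) := by
          intro hc; subst hc; exact (zero_not_rl hn) ha'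
        rw [if_neg this]
        have := w_nonneg hn θ.val
        have := w_nonneg hn (n / 2)
        linarith
      · rw [ep_nonreal hn ha', c_nonreal hn ha', if_pos rfl]
    by_cases haθ : a = θ
    · subst haθ
      apply mul_le_mul_of_nonneg_left ?_ (φm_nonneg hn a (some a))
      rw [pm_theta_eq hn hθ, ep_real hn hθ, if_pos rfl, c_real hn hθ]
      by_cases ha' : rl n a'
      · rw [ep_real hn ha', c_real hn ha']
        by_cases he : a' = a
        · rw [if_pos he]
        · rw [if_neg he]
          have := w_nonneg hn (n / 2)
          linarith
      · rw [ep_nonreal hn ha', c_nonreal hn ha']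
        have h0a : ¬ (0:Fin n) = a := by
          intro hc; have := hθ.1; rw [← hc] at this; simp at this
        rw [if_neg h0a]
        norm_num
    · -- zero weight component
      have : φm n θ (some a) = 0 := by
        rw [φm_some_real hn hθ, if_neg (fun hc => ha0 (val_eq_zero hn hc)), if_neg haθ]
      rw [this, zero_mul, zero_mul]
  · -- user IC
    intro θ θ'
    rw [ge_iff_le, rand_util_own hn θ]
    exact rand_util_le hn θ θ'
  · -- user IR
    intro θ
    rw [rand_util_own hn θ]

theorem randVal : (I n hn).randValue (φm n) (pm n) = (n / 2 : ℕ) / S n := by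
  haveI : NeZero n := ⟨by omega⟩
  unfold DelegationInstance.randValue
  have inner : ∀ θ : Fin n, (I n hn).ξ θ * ∑ a, φm n θ (some a) * ((I n hn).ep a (pm n θ a) - (I n hn).c a) =
      (fun j : ℕ => if 1 ≤ j ∧ j ≤ n / 2 then (2⁻¹:ℝ) ^ j * (w n j / 2) else 0) θ.val := by
    intro θ
    by_cases hθ : rl n θ
    · have hsum : ∑ a, φm n θ (some a) * ((I n hn).ep a (pm n θ a) - (I n hn).c a) = w n θ.val / 2 := by
        rw [rand_sum hn hθ (fun a => (I n hn).ep a (pm n θ a) - (I n hn).c a)]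
        rw [ep_nonreal hn (zero_not_rl hn), ep_real hn hθ, pm_zero_eq hn hθ, pm_theta_eq hn hθ,
          c_nonreal hn (zero_not_rl hn), c_real hn hθ]
        simp
        ring
      rw [hsum]
      have hξ : (I n hn).ξ θ = (2⁻¹:ℝ) ^ θ.val := by
        show (if θ.val = 0 then _ else _) = _
        rw [if_neg (by omega : ¬ θ.val = 0), if_pos hθ.2]
      rw [hξ]
      show _ = if 1 ≤ θ.val ∧ θ.val ≤ n / 2 then (2⁻¹:ℝ) ^ θ.val * (w n θ.val / 2) else 0
      rw [if_pos hθ]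
    · rw [rand_sum_dummy hn hθ, mul_zero]
      show (0:ℝ) = if 1 ≤ θ.val ∧ θ.val ≤ n / 2 then (2⁻¹:ℝ) ^ θ.val * (w n θ.val / 2) else 0
      rw [if_neg hθ]
  rw [Finset.sum_congr rfl (fun θ _ => inner θ)]
  rw [Fin.sum_univ_eq_sum_range (fun j => if 1 ≤ j ∧ j ≤ n / 2 then (2⁻¹:ℝ) ^ j * (w n j / 2) else 0) n]
  rw [← Finset.sum_filter]
  have hfil : (Finset.range n).filter (fun j => 1 ≤ j ∧ j ≤ n / 2) = Finset.Icc 1 (n / 2) := by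
    ext j
    simp only [Finset.mem_filter, Finset.mem_range, Finset.mem_Icc]
    omega
  rw [hfil, Finset.sum_congr rfl (fun j _ => term_eq j), Finset.sum_const, Nat.card_Icc]
  simp only [nsmul_eq_mul, mul_one_div]
  norm_num

end Feas


section Direct

open DelegationInstance

set_option linter.unusedSectionVars false

variable {n : ℕ} (hn : 2 ≤ n)
include hn

theorem direct_bound (m : Fin n → Option (Fin n × (Fin n → ℝ)))
    (hm : (I n hn).DirectFeasible m) : (I n hn).directValue m ≤ 4 / S n := by
  classical
  haveI : NeZero n := ⟨by omega⟩
  obtain ⟨hPi, hIC, hIR⟩ := hm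
  have hSpos := S_pos hn
  set B : Finset (Fin n) := Finset.univ.filter
    (fun θ => rl n θ ∧ ∃ a pp, m θ = some (a, pp) ∧ ¬ rl n a) with hB
  have hout : ∀ θ : Fin n, θ ∉ B → (I n hn).optV (m θ) ≤ 0 := by
    intro θ hθ
    rw [hB, Finset.mem_filter] at hθ
    push_neg at hθ
    have hθ' := hθ (Finset.mem_univ θ)
    rcases hmθ : m θ with _ | ⟨a, pp⟩
    · exact le_refl 0
    · have hIRθ := hIR θ
      rw [hmθ] at hIRθ
      by_cases ha : rl n a
      · -- flag action: profit at most value − w_h ≤ 0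
        show (I n hn).ep a pp - (I n hn).c a ≤ 0
        rw [ep_real hn ha, c_real hn ha]
        have hU : (0:ℝ) ≤ (I n hn).R θ a - pp a := by
          have : (I n hn).optU θ (some (a, pp)) =
              (I n hn).ep a (fun ω => (I n hn).R θ ω - pp ω) := rfl
          rw [this, ep_real hn ha] at hIRθ
          exact hIRθ
        have := R_le_wh hn θ a
        linarith
      · -- L action: buyer must be a dummy, pays at most 0
        have hθd : ¬ rl n θ := by
          intro hrl
          exact ha (hθ' hrl a pp hmθ)
        show (I n hn).ep a pp - (I n hn).c a ≤ 0
        rw [ep_nonreal hn ha, c_nonreal hn ha]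
        have : (I n hn).optU θ (some (a, pp)) =
            (I n hn).ep a (fun ω => (I n hn).R θ ω - pp ω) := rfl
        rw [this, ep_nonreal hn ha] at hIRθ
        have hR0 : (I n hn).R θ (0 : Fin n) = 0 := by
          rw [R_zero hn, if_neg hθd]
        simp only [hR0] at hIRθ
        linarith
  rcases B.eq_empty_or_nonempty with hBe | hBne
  · -- no real L buyers
    have : (I n hn).directValue m ≤ 0 := by
      apply Finset.sum_nonpos
      intro θ _
      have h1 := (I n hn).ξ_nonneg θ
      have h2 := hout θ (by rw [hBe]; exact Finset.notMem_empty θ)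
      calc (I n hn).ξ θ * (I n hn).optV (m θ) ≤ (I n hn).ξ θ * 0 :=
            mul_le_mul_of_nonneg_left h2 h1
        _ = 0 := mul_zero _
    have : (0:ℝ) ≤ 4 / S n := by positivity
    linarith
  · obtain ⟨θ₀, hθ₀B, hmin⟩ := Finset.exists_min_image B (fun θ => θ.val) hBne
    have hθ₀B' := hθ₀B
    rw [hB, Finset.mem_filter] at hθ₀B'
    obtain ⟨-, hθ₀rl, a₀, pp₀, hmθ₀, ha₀⟩ := hθ₀B'
    -- the minimal buyer's price is at most its value
    have hq₀ : pp₀ (0 : Fin n) ≤ w n θ₀.val := by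
      have hIRθ₀ := hIR θ₀
      rw [hmθ₀] at hIRθ₀
      have : (I n hn).optU θ₀ (some (a₀, pp₀)) =
          (I n hn).ep a₀ (fun ω => (I n hn).R θ₀ ω - pp₀ ω) := rfl
      rw [this, ep_nonreal hn ha₀] at hIRθ₀
      have hR0 : (I n hn).R θ₀ (0 : Fin n) = w n θ₀.val := by
        rw [R_zero hn, if_pos hθ₀rl]
      simp only [hR0] at hIRθ₀
      linarith
    -- every buyer pays at most the minimal buyer's value
    have key : ∀ θ ∈ B, (I n hn).optV (m θ) ≤ w n θ₀.val := by
      intro θ hθB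
      have hθB' := hθB
      rw [hB, Finset.mem_filter] at hθB'
      obtain ⟨-, hθrl, a, pp, hmθ, ha⟩ := hθB'
      have hICθ := hIC θ θ₀
      rw [hmθ, hmθ₀] at hICθ
      have e1 : (I n hn).optU θ (some (a₀, pp₀)) =
          (I n hn).R θ (0 : Fin n) - pp₀ (0 : Fin n) := by
        show (I n hn).ep a₀ (fun ω => (I n hn).R θ ω - pp₀ ω) = _
        rw [ep_nonreal hn ha₀]
      have e2 : (I n hn).optU θ (some (a, pp)) =
          (I n hn).R θ (0 : Fin n) - pp (0 : Fin n) := by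
        show (I n hn).ep a (fun ω => (I n hn).R θ ω - pp ω) = _
        rw [ep_nonreal hn ha]
      rw [e1, e2] at hICθ
      rw [hmθ]
      show (I n hn).ep a pp - (I n hn).c a ≤ w n θ₀.val
      rw [ep_nonreal hn ha, c_nonreal hn ha]
      linarith
  -- assemble
    have step1 : (I n hn).directValue m ≤
        ∑ θ : Fin n, (if θ ∈ B then (2⁻¹:ℝ) ^ θ.val * w n θ₀.val else 0) := by
      apply Finset.sum_le_sum
      intro θ _
      by_cases hθB : θ ∈ B
      · rw [if_pos hθB]
        have hθrl : rl n θ := by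
          have := hθB
          rw [hB, Finset.mem_filter] at this
          exact this.2.1
        have hξ : (I n hn).ξ θ = (2⁻¹:ℝ) ^ θ.val := by
          show (if θ.val = 0 then _ else _) = _
          rw [if_neg (by omega : ¬ θ.val = 0), if_pos hθrl.2]
        rw [hξ]
        exact mul_le_mul_of_nonneg_left (key θ hθB) (by positivity)
      · rw [if_neg hθB]
        have h1 := (I n hn).ξ_nonneg θ
        have h2 := hout θ hθB
        calc (I n hn).ξ θ * (I n hn).optV (m θ) ≤ (I n hn).ξ θ * 0 :=
              mul_le_mul_of_nonneg_left h2 h1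
          _ = 0 := mul_zero _
    have step2 : ∑ θ : Fin n, (if θ ∈ B then (2⁻¹:ℝ) ^ θ.val * w n θ₀.val else 0) =
        (∑ θ ∈ B, (2⁻¹:ℝ) ^ θ.val) * w n θ₀.val := by
      rw [Finset.sum_ite_mem, Finset.univ_inter, Finset.sum_mul]
    have step3 : ∑ θ ∈ B, (2⁻¹:ℝ) ^ θ.val ≤ 2 * (2⁻¹:ℝ) ^ θ₀.val := by
      have himg : ∑ θ ∈ B, (2⁻¹:ℝ) ^ θ.val = ∑ j ∈ B.image Fin.val, (2⁻¹:ℝ) ^ j := by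
        rw [Finset.sum_image (fun x _ y _ hxy => Fin.val_injective hxy)]
      rw [himg]
      calc ∑ j ∈ B.image Fin.val, (2⁻¹:ℝ) ^ j
          ≤ ∑ j ∈ Finset.Icc θ₀.val (n / 2), (2⁻¹:ℝ) ^ j := by
            apply Finset.sum_le_sum_of_subset_of_nonneg
            · intro j hj
              rw [Finset.mem_image] at hj
              obtain ⟨θ, hθB, hθj⟩ := hj
              have h1 := hmin θ hθB
              have h2 : rl n θ := by
                rw [hB, Finset.mem_filter] at hθB
                exact hθB.2.1
              rw [Finset.mem_Icc]
              omega
            · intro j _ _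
              positivity
        _ ≤ 2 * (2⁻¹:ℝ) ^ θ₀.val := geo_le θ₀.val (n / 2)
    have hw0 := w_nonneg hn θ₀.val
    calc (I n hn).directValue m ≤ (∑ θ ∈ B, (2⁻¹:ℝ) ^ θ.val) * w n θ₀.val := by
          rw [← step2]; exact step1
      _ ≤ (2 * (2⁻¹:ℝ) ^ θ₀.val) * w n θ₀.val := mul_le_mul_of_nonneg_right step3 hw0
      _ = 4 / S n := by rw [mul_comm]; exact w_mul_geo θ₀.val

end Direct

end

end Stmt14Aux


/-- For every even `n ≥ 2` there is a delegation instance with `n` types (and `n`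
actions and outcomes) in which, with `S := Σ_{k ∈ [n/2]} 2^{k+1}`, some feasible menu
of randomized payment schemes has value at least `(n/2)/S > 0`, every feasible direct
menu of deterministic payment schemes has value at most `8/S`, and hence the
randomized menu earns at least `n/16` times the value of every such direct menu. -/
theorem stmt14 (n : ℕ) (hn : 2 ≤ n) (heven : Even n) :
    ∃ I : DelegationInstance (Fin n) (Fin n) (Fin n),
      ∃ φ p, I.RandFeasible φ p ∧
        I.randValue φ p ≥ ((n : ℝ) / 2) / (∑ k ∈ Finset.Icc 1 (n / 2), (2 : ℝ) ^ (k + 1)) ∧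
        0 < I.randValue φ p ∧
        (∀ m, I.DirectFeasible m → ((n : ℝ) / 16) * I.directValue m ≤ I.randValue φ p) ∧
        (∀ m, I.DirectFeasible m →
          I.directValue m ≤ 8 / (∑ k ∈ Finset.Icc 1 (n / 2), (2 : ℝ) ^ (k + 1))) := by
  open Stmt14Aux in
  have hSpos : 0 < Stmt14Aux.S n := Stmt14Aux.S_pos hn
  have hSdef : (∑ k ∈ Finset.Icc 1 (n / 2), (2 : ℝ) ^ (k + 1)) = Stmt14Aux.S n := rfl
  have hcast : ((n / 2 : ℕ) : ℝ) = (n : ℝ) / 2 := by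
    obtain ⟨k, hk⟩ := heven
    subst hk
    have h2 : (k + k) / 2 = k := by omega
    rw [h2]
    push_cast
    ring
  have hval : (Stmt14Aux.I n hn).randValue (Stmt14Aux.φm n) (Stmt14Aux.pm n) =
      ((n : ℝ) / 2) / Stmt14Aux.S n := by
    rw [Stmt14Aux.randVal hn, hcast]
  have hdb : ∀ m, (Stmt14Aux.I n hn).DirectFeasible m →
      (Stmt14Aux.I n hn).directValue m ≤ 8 / Stmt14Aux.S n := by
    intro m hm
    have h1 := Stmt14Aux.direct_bound hn m hm
    have h2 : 4 / Stmt14Aux.S n ≤ 8 / Stmt14Aux.S n := by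
      rw [div_le_div_iff₀ hSpos hSpos]
      nlinarith
    linarith
  refine ⟨Stmt14Aux.I n hn, Stmt14Aux.φm n, Stmt14Aux.pm n, Stmt14Aux.randFeas hn, ?_, ?_, ?_, ?_⟩
  · rw [hval, hSdef]
  · rw [hval]
    have hn0 : (0:ℝ) < (n : ℝ) / 2 := by
      have : (0:ℝ) < (n:ℝ) := by
        exact_mod_cast (by omega : 0 < n)
      linarith
    exact div_pos hn0 hSpos
  · intro m hm
    have h1 := hdb m hm
    have h2 : (0:ℝ) ≤ (n : ℝ) / 16 := by positivity
    calc ((n : ℝ) / 16) * (Stmt14Aux.I n hn).directValue m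
        ≤ ((n : ℝ) / 16) * (8 / Stmt14Aux.S n) := mul_le_mul_of_nonneg_left h1 h2
      _ = ((n : ℝ) / 2) / Stmt14Aux.S n := by ring
      _ = (Stmt14Aux.I n hn).randValue (Stmt14Aux.φm n) (Stmt14Aux.pm n) := hval.symm
  · intro m hm
    rw [hSdef]
    exact hdb m hm
end

section
/- For every feasible solution (x, φ) of the LP relaxation, there exists a regular feasible solution (x̄, φ̄) of the LP relaxation whose objective value is at least that of (x, φ). -/
open Finset

namespace DelegationInstance

variable {Θ Ω A : Type*} [Fintype Θ] [Fintype Ω] [Fintype A]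

/-- Feasibility for the LP relaxation with variables `x_{θ,a,ω} ≥ 0` and
distributions `φ^θ ∈ Δ(A ∪ {∅})`. -/
def LPFeasible (I : DelegationInstance Θ Ω A)
    (x : Θ → A → Ω → ℝ) (φ : Θ → Option A → ℝ) : Prop :=
  (∀ θ a ω, 0 ≤ x θ a ω) ∧
  (∀ θ o, 0 ≤ φ θ o) ∧ (∀ θ, ∑ o : Option A, φ θ o = 1) ∧
  (∀ θ a a', ∑ ω, I.F a ω * (x θ a ω - φ θ (some a) * I.c a) ≥
    ∑ ω, I.F a' ω * (x θ a ω - φ θ (some a) * I.c a')) ∧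
  (∀ θ θ', ∑ ω, ∑ a, I.F a ω * (φ θ (some a) * I.R θ ω - x θ a ω) ≥
    ∑ ω, ∑ a, I.F a ω * (φ θ' (some a) * I.R θ ω - x θ' a ω)) ∧
  (∀ θ, 0 ≤ ∑ ω, ∑ a, I.F a ω * (φ θ (some a) * I.R θ ω - x θ a ω))

/-- Objective of the LP relaxation. -/
def LPobj (I : DelegationInstance Θ Ω A)
    (x : Θ → A → Ω → ℝ) (φ : Θ → Option A → ℝ) : ℝ :=
  ∑ θ, ∑ a, ∑ ω, I.ξ θ * I.F a ω * (x θ a ω - φ θ (some a) * I.c a)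

end DelegationInstance

/-- A solution `(x, φ)` of the LP relaxation is regular if `φ_a^θ = 0` implies
`x_{θ,a,ω} = 0` for all `ω`. -/
def Regular {Θ Ω A : Type*} (x : Θ → A → Ω → ℝ) (φ : Θ → Option A → ℝ) : Prop :=
  ∀ θ a, φ θ (some a) = 0 → ∀ ω, x θ a ω = 0

/-- Every feasible solution of the LP relaxation can be turned into a regular feasible
solution with at least the same objective value. -/
theorem stmt16 {Θ Ω A : Type*} [Fintype Θ] [Fintype Ω] [Fintype A]
    (I : DelegationInstance Θ Ω A)
    (x : Θ → A → Ω → ℝ) (φ : Θ → Option A → ℝ) (h : I.LPFeasible x φ) :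
    ∃ (x' : Θ → A → Ω → ℝ) (φ' : Θ → Option A → ℝ),
      I.LPFeasible x' φ' ∧ Regular x' φ' ∧ I.LPobj x φ ≤ I.LPobj x' φ' := by
  classical
  obtain ⟨hx, hφ, hφs, h1, h2, h3⟩ := h
  set N : Θ → Finset A := fun θ => univ.filter (fun a => φ θ (some a) ≠ 0) with hN
  set Δ : Θ → ℝ := fun θ =>
    (∑ a, ∑ ω, I.F a ω * x θ a ω) - ∑ a ∈ N θ, ∑ ω, I.F a ω * x θ a ω with hΔdef
  set δ : Θ → ℝ := fun θ => Δ θ / (N θ).card with hδdef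
  set x' : Θ → A → Ω → ℝ := fun θ a ω =>
    if φ θ (some a) = 0 then 0 else x θ a ω + δ θ with hx'def
  -- basic nonnegativity facts
  have hΔnn : ∀ θ, 0 ≤ Δ θ := by
    intro θ
    have : ∑ a ∈ N θ, ∑ ω, I.F a ω * x θ a ω ≤ ∑ a, ∑ ω, I.F a ω * x θ a ω := by
      apply Finset.sum_le_sum_of_subset_of_nonneg (Finset.filter_subset _ _)
      intro a _ _
      exact Finset.sum_nonneg fun ω _ => mul_nonneg (I.F_nonneg a ω) (hx θ a ω)
    simpa [hΔdef] using sub_nonneg.mpr this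
  have hδnn : ∀ θ, 0 ≤ δ θ := fun θ => div_nonneg (hΔnn θ) (Nat.cast_nonneg _)
  have hx'nn : ∀ θ a ω, 0 ≤ x' θ a ω := by
    intro θ a ω
    simp only [hx'def]
    split
    · exact le_refl 0
    · exact add_nonneg (hx θ a ω) (hδnn θ)
  -- if N θ = ∅, total expected payment is 0
  have hS0 : ∀ θ, N θ = ∅ → ∑ a, ∑ ω, I.F a ω * x θ a ω = 0 := by
    intro θ hNe
    have hzero : ∀ a : A, φ θ (some a) = 0 := by
      intro a
      by_contra hc
      have : a ∈ N θ := by simp [hN, hc]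
      simp [hNe] at this
    have h3θ := h3 θ
    have hrw : ∑ ω, ∑ a, I.F a ω * (φ θ (some a) * I.R θ ω - x θ a ω)
        = -∑ a, ∑ ω, I.F a ω * x θ a ω := by
      rw [Finset.sum_comm]
      rw [← Finset.sum_neg_distrib]
      apply Finset.sum_congr rfl
      intro a _
      rw [← Finset.sum_neg_distrib]
      apply Finset.sum_congr rfl
      intro ω _
      rw [hzero a]; ring
    rw [hrw] at h3θ
    have hge : 0 ≤ ∑ a, ∑ ω, I.F a ω * x θ a ω :=
      Finset.sum_nonneg fun a _ =>
        Finset.sum_nonneg fun ω _ => mul_nonneg (I.F_nonneg a ω) (hx θ a ω)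
    linarith
  have hcard : ∀ θ, ((N θ).card : ℝ) * δ θ = Δ θ := by
    intro θ
    by_cases hc : (N θ).card = 0
    · have hNe : N θ = ∅ := Finset.card_eq_zero.mp hc
      have : Δ θ = 0 := by simp [hΔdef, hNe, hS0 θ hNe]
      simp [hc, this]
    · rw [hδdef]
      field_simp
  -- total expected payment is preserved
  have hS : ∀ θ, ∑ a, ∑ ω, I.F a ω * x' θ a ω = ∑ a, ∑ ω, I.F a ω * x θ a ω := by
    intro θ
    have hsplit := Finset.sum_filter_add_sum_filter_not (Finset.univ : Finset A)
      (fun a => φ θ (some a) ≠ 0) (fun a => ∑ ω, I.F a ω * x' θ a ω)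
    have hzpart : ∑ a ∈ Finset.univ.filter (fun a => ¬ φ θ (some a) ≠ 0),
        ∑ ω, I.F a ω * x' θ a ω = 0 := by
      apply Finset.sum_eq_zero
      intro a ha
      simp only [Finset.mem_filter, not_not] at ha
      apply Finset.sum_eq_zero
      intro ω _
      simp [hx'def, ha.2]
    have hnpart : ∑ a ∈ N θ, ∑ ω, I.F a ω * x' θ a ω
        = (∑ a ∈ N θ, ∑ ω, I.F a ω * x θ a ω) + ((N θ).card : ℝ) * δ θ := by
      rw [Finset.card_eq_sum_ones, Nat.cast_sum]
      rw [Finset.sum_mul, ← Finset.sum_add_distrib]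
      apply Finset.sum_congr rfl
      intro a ha
      simp only [hN, Finset.mem_filter] at ha
      have : ∀ ω, x' θ a ω = x θ a ω + δ θ := by
        intro ω; simp [hx'def, ha.2]
      calc ∑ ω, I.F a ω * x' θ a ω = ∑ ω, (I.F a ω * x θ a ω + I.F a ω * δ θ) := by
            apply Finset.sum_congr rfl; intro ω _; rw [this ω]; ring
        _ = (∑ ω, I.F a ω * x θ a ω) + (∑ ω, I.F a ω) * δ θ := by
            rw [Finset.sum_add_distrib, Finset.sum_mul]
        _ = (∑ ω, I.F a ω * x θ a ω) + (1 : ℝ) * δ θ := by rw [I.F_sum a]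
        _ = (∑ ω, I.F a ω * x θ a ω) + ((1 : ℕ) : ℝ) * δ θ := by norm_num
    have : ∑ a, ∑ ω, I.F a ω * x' θ a ω
        = (∑ a ∈ N θ, ∑ ω, I.F a ω * x θ a ω) + ((N θ).card : ℝ) * δ θ := by
      rw [← hsplit, hzpart, add_zero, ← hnpart]
    rw [this, hcard θ, hΔdef]
    ring
  -- the type-utility aggregates are preserved
  have hU : ∀ θ τ, ∑ ω, ∑ a, I.F a ω * (φ τ (some a) * I.R θ ω - x' τ a ω)
      = ∑ ω, ∑ a, I.F a ω * (φ τ (some a) * I.R θ ω - x τ a ω) := by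
    intro θ τ
    have e : ∀ (y : Θ → A → Ω → ℝ), ∑ ω, ∑ a, I.F a ω * (φ τ (some a) * I.R θ ω - y τ a ω)
        = (∑ ω, ∑ a, I.F a ω * (φ τ (some a) * I.R θ ω)) - ∑ a, ∑ ω, I.F a ω * y τ a ω := by
      intro y
      have step : ∑ ω, ∑ a, I.F a ω * (φ τ (some a) * I.R θ ω - y τ a ω)
          = (∑ ω, ∑ a, I.F a ω * (φ τ (some a) * I.R θ ω)) - ∑ ω, ∑ a, I.F a ω * y τ a ω := by
        rw [← Finset.sum_sub_distrib]
        apply Finset.sum_congr rfl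
        intro ω _
        rw [← Finset.sum_sub_distrib]
        apply Finset.sum_congr rfl
        intro a _
        ring
      rw [step]
      congr 1
      exact Finset.sum_comm
    rw [e x', e x, hS τ]
  refine ⟨x', φ, ⟨hx'nn, hφ, hφs, ?_, ?_, ?_⟩, ?_, ?_⟩
  · -- constraint 1
    intro θ a a'
    by_cases hz : φ θ (some a) = 0
    · simp [hx'def, hz]
    · have key : ∀ b : A, ∑ ω, I.F b ω * (x' θ a ω - φ θ (some a) * I.c b)
          = (∑ ω, I.F b ω * (x θ a ω - φ θ (some a) * I.c b)) + δ θ := by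
        intro b
        calc ∑ ω, I.F b ω * (x' θ a ω - φ θ (some a) * I.c b)
            = ∑ ω, (I.F b ω * (x θ a ω - φ θ (some a) * I.c b) + I.F b ω * δ θ) := by
              apply Finset.sum_congr rfl
              intro ω _
              simp only [hx'def, if_neg hz]
              ring
          _ = (∑ ω, I.F b ω * (x θ a ω - φ θ (some a) * I.c b)) + (∑ ω, I.F b ω) * δ θ := by
              rw [Finset.sum_add_distrib, Finset.sum_mul]
          _ = _ := by rw [I.F_sum b]; ring
      rw [ge_iff_le, key a, key a']
      have := h1 θ a a'
      linarith
  · -- constraint 2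
    intro θ θ'
    rw [ge_iff_le, hU θ θ, hU θ θ']
    exact h2 θ θ'
  · -- constraint 3
    intro θ
    rw [hU θ θ]
    exact h3 θ
  · -- regularity
    intro θ a hza ω
    simp [hx'def, hza]
  · -- objective
    have e : ∀ (y : Θ → A → Ω → ℝ), (∀ θ a ω, 0 ≤ y θ a ω) → I.LPobj y φ
        = ∑ θ, (I.ξ θ * (∑ a, ∑ ω, I.F a ω * y θ a ω)
            - I.ξ θ * ∑ a, ∑ ω, I.F a ω * (φ θ (some a) * I.c a)) := by
      intro y _
      unfold DelegationInstance.LPobj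
      apply Finset.sum_congr rfl
      intro θ _
      rw [Finset.mul_sum, Finset.mul_sum, ← Finset.sum_sub_distrib]
      apply Finset.sum_congr rfl
      intro a _
      rw [Finset.mul_sum, Finset.mul_sum, ← Finset.sum_sub_distrib]
      apply Finset.sum_congr rfl
      intro ω _
      ring
    rw [e x hx, e x' hx'nn]
    apply le_of_eq
    apply Finset.sum_congr rfl
    intro θ _
    rw [hS θ]
end

section
/- Let (x, φ) be a regular feasible solution of the LP relaxation. Define p_{θ,a}(ω) := x_{θ,a,ω}/φ_a^θ whenever φ_a^θ ≠ 0, and p_{θ,a}(ω) := 0 otherwise. Then Φ := {(φ^θ, (p_{θ,a})_{a∈A})}_{θ∈Θ} is a feasible menu of randomized payment schemes whose value equals the LP objective value of (x, φ). -/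
open Finset

/-- From a regular feasible LP-relaxation solution `(x, φ)`, the payments
`p_{θ,a}(ω) := x_{θ,a,ω} / φ_a^θ` (and `0` when `φ_a^θ = 0`) yield a feasible menu of
randomized payment schemes whose value equals the LP objective value of `(x, φ)`. -/
theorem stmt17 {Θ Ω A : Type*} [Fintype Θ] [Fintype Ω] [Fintype A]
    (I : DelegationInstance Θ Ω A)
    (x : Θ → A → Ω → ℝ) (φ : Θ → Option A → ℝ)
    (h : I.LPFeasible x φ) (hr : Regular x φ) :
    I.RandFeasible φ
      (fun θ a ω => if φ θ (some a) = 0 then 0 else x θ a ω / φ θ (some a)) ∧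
    I.randValue φ
      (fun θ a ω => if φ θ (some a) = 0 then 0 else x θ a ω / φ θ (some a)) =
      I.LPobj x φ := by
  obtain ⟨hx, hφ, hφ1, hic, huic, hir⟩ := h
  set p : Θ → A → Ω → ℝ :=
    fun θ a ω => if φ θ (some a) = 0 then 0 else x θ a ω / φ θ (some a) with hp
  have hpx : ∀ θ a ω, φ θ (some a) * p θ a ω = x θ a ω := by
    intro θ a ω
    by_cases h0 : φ θ (some a) = 0
    · simp [hp, h0, hr θ a h0 ω]
    · simp [hp, h0]
      field_simp
  have key : ∀ θ a a', φ θ (some a) * (I.ep a' (p θ a) - I.c a') =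
      ∑ ω, I.F a' ω * (x θ a ω - φ θ (some a) * I.c a') := by
    intro θ a a'
    have : ∑ ω, I.F a' ω * (x θ a ω - φ θ (some a) * I.c a') =
        (∑ ω, I.F a' ω * x θ a ω) - (∑ ω, I.F a' ω) * (φ θ (some a) * I.c a') := by
      rw [Finset.sum_mul]
      rw [← Finset.sum_sub_distrib]
      apply Finset.sum_congr rfl
      intro ω _
      ring
    rw [this, I.F_sum a', one_mul]
    simp only [DelegationInstance.ep, Finset.mul_sum, mul_sub]
    congr 1
    apply Finset.sum_congr rfl
    intro ω _
    rw [← hpx θ a ω]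
    ring
  have key2 : ∀ θ θ', ∑ a, φ θ' (some a) * I.ep a (fun ω => I.R θ ω - p θ' a ω) =
      ∑ ω, ∑ a, I.F a ω * (φ θ' (some a) * I.R θ ω - x θ' a ω) := by
    intro θ θ'
    rw [Finset.sum_comm]
    apply Finset.sum_congr rfl
    intro a _
    simp only [DelegationInstance.ep, Finset.mul_sum]
    apply Finset.sum_congr rfl
    intro ω _
    rw [← hpx θ' a ω]
    ring
  refine ⟨⟨hφ, hφ1, ?_, ?_, ?_, ?_⟩, ?_⟩
  · intro θ a ω
    by_cases h0 : φ θ (some a) = 0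
    · simp [hp, h0]
    · simp only [hp, h0, if_false]
      exact div_nonneg (hx θ a ω) (hφ θ (some a))
  · intro θ a a'
    rw [ge_iff_le, key θ a a', key θ a a]
    exact hic θ a a'
  · intro θ θ'
    rw [ge_iff_le, key2 θ θ', key2 θ θ]
    exact huic θ θ'
  · intro θ
    rw [key2 θ θ]
    exact hir θ
  · unfold DelegationInstance.randValue DelegationInstance.LPobj
    apply Finset.sum_congr rfl
    intro θ _
    rw [Finset.mul_sum]
    apply Finset.sum_congr rfl
    intro a _
    rw [key θ a a, Finset.mul_sum]
    apply Finset.sum_congr rfl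
    intro ω _
    ring
end
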